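/- arXiv:1610.01552 — 2 statements merged into one kernel-verified Lean document; each statement's English description precedes it below -/
import Mathlib

section
/- Let 𝒢 be a real Hilbert space, let φ ∈ Γ₀(𝒢), and let K be a nonempty closed bounded interval contained in [0, +∞). Define g : 𝒢 → (-∞, +∞] by g(y) = inf_{η ∈ K} φ̃(η, y). Then g is proper, lower semicontinuous, and convex, i.e., g ∈ Γ₀(𝒢). -/
open scoped RealInnerProductSpace Classical

noncomputable section

/-- Properness for extended-real-valued functions. -/
def IsProperE {G : Type*} (f : G → EReal) : Prop :=
  (∀ x, f x ≠ ⊥) ∧ ∃ x, f x ≠ ⊤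

/-- Convexity for extended-real-valued functions. -/
def ConvexE (G : Type*) [AddCommGroup G] [Module ℝ G] (f : G → EReal) : Prop :=
  ∀ x y : G, ∀ a b : ℝ, 0 ≤ a → 0 ≤ b → a + b = 1 →
    f (a • x + b • y) ≤ (a : EReal) * f x + (b : EReal) * f y

/-- The class Γ₀: proper, lower semicontinuous, convex. -/
def Gamma0 (G : Type*) [AddCommGroup G] [Module ℝ G] [TopologicalSpace G]
    (f : G → EReal) : Prop :=
  IsProperE f ∧ LowerSemicontinuous f ∧ ConvexE G f

/-- The recession function. -/
def recFn {G : Type*} [AddCommGroup G] (f : G → EReal) (y : G) : EReal :=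
  ⨆ x : {x : G // f x ≠ ⊤}, (f ((x : G) + y) - f (x : G))

/-- The perspective function. -/
def persp {G : Type*} [AddCommGroup G] [Module ℝ G] (f : G → EReal) : ℝ × G → EReal :=
  fun p => if 0 < p.1 then (p.1 : EReal) * f (p.1⁻¹ • p.2)
           else if p.1 = 0 then recFn f p.2 else ⊤

/-- The Fenchel conjugate. -/
def conjFn {G : Type*} [NormedAddCommGroup G] [InnerProductSpace ℝ G]
    (f : G → EReal) (u : G) : EReal :=
  ⨆ x : G, (((inner ℝ x u : ℝ) : EReal) - f x)

/-- The support function of a set. -/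
def suppFn {G : Type*} [NormedAddCommGroup G] [InnerProductSpace ℝ G]
    (D : Set G) (y : G) : EReal :=
  ⨆ u ∈ D, ((inner ℝ y u : ℝ) : EReal)

/-- The convex subdifferential. -/
def subdiff {G : Type*} [NormedAddCommGroup G] [InnerProductSpace ℝ G]
    (f : G → EReal) (x : G) : Set G :=
  {u | ∀ z : G, (((inner ℝ (z - x) u : ℝ) : EReal) + f x ≤ f z)}
namespace PM

lemma coe_mul_add (r : ℝ) (hr : 0 ≤ r) (x y : EReal) :
    (r : EReal) * (x + y) = (r : EReal) * x + (r : EReal) * y := by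
  rcases eq_or_lt_of_le hr with h | h
  · simp [← h]
  · induction x with
    | bot => simp [EReal.coe_mul_bot_of_pos h]
    | coe x =>
      induction y with
      | bot => simp [EReal.coe_mul_bot_of_pos h, ← EReal.coe_mul, ← EReal.coe_add]
      | coe y => norm_cast; ring
      | top => simp [EReal.coe_mul_top_of_pos h, ← EReal.coe_mul, ← EReal.coe_add]
    | top =>
      induction y with
      | bot => simp [EReal.coe_mul_bot_of_pos h, EReal.coe_mul_top_of_pos h]
      | coe y => simp [EReal.coe_mul_top_of_pos h, ← EReal.coe_mul]
      | top => simp [EReal.coe_mul_top_of_pos h]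

lemma coe_mul_ne_bot (r : ℝ) (hr : 0 < r) (x : EReal) (hx : x ≠ ⊥) :
    (r : EReal) * x ≠ ⊥ := by
  induction x with
  | bot => exact absurd rfl hx
  | coe x => rw [← EReal.coe_mul]; exact EReal.coe_ne_bot _
  | top => simp [EReal.coe_mul_top_of_pos hr]

lemma coe_mul_ne_top (r : ℝ) (hr : 0 < r) (x : EReal) (hx : x ≠ ⊤) :
    (r : EReal) * x ≠ ⊤ := by
  induction x with
  | bot => simp [EReal.coe_mul_bot_of_pos hr]
  | coe x => rw [← EReal.coe_mul]; exact EReal.coe_ne_top _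
  | top => exact absurd rfl hx

lemma coe_mul_sub_coe (r : ℝ) (hr : 0 ≤ r) (x : EReal) (s : ℝ) :
    (r : EReal) * (x - (s : EReal)) = (r : EReal) * x - ((r * s : ℝ) : EReal) := by
  have h1 : x - (s : EReal) = x + ((-s : ℝ) : EReal) := by
    rw [sub_eq_add_neg]; norm_cast
  rw [h1, coe_mul_add r hr, ← EReal.coe_mul, sub_eq_add_neg, ← EReal.coe_neg]
  norm_cast
  ring_nf

lemma sub_coe_ne_bot (a : EReal) (ha : a ≠ ⊥) (s : ℝ) : a - (s : EReal) ≠ ⊥ := by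
  induction a with
  | bot => exact absurd rfl ha
  | coe a => rw [← EReal.coe_sub]; exact EReal.coe_ne_bot _
  | top => simp [EReal.top_sub_coe]

lemma sub_sub_chain (a : EReal) (s r : ℝ) :
    a - (r : EReal) = (a - (s : EReal)) + ((s - r : ℝ) : EReal) := by
  induction a with
  | bot => rw [EReal.bot_sub, EReal.bot_sub, EReal.bot_add]
  | coe a => norm_cast; ring
  | top => rw [EReal.top_sub_coe, EReal.top_sub_coe, EReal.top_add_of_ne_bot (EReal.coe_ne_bot _)]

section recFn
variable {G : Type*} [AddCommGroup G] [Module ℝ G] (φ : G → EReal)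
variable (hbot : ∀ x, φ x ≠ ⊥) (x₀ : G) (hx₀ : φ x₀ ≠ ⊤)

lemma le_recFn (x : G) (hx : φ x ≠ ⊤) (y : G) : φ (x + y) - φ x ≤ recFn φ y :=
  le_iSup (fun z : {x : G // φ x ≠ ⊤} => φ ((z : G) + y) - φ (z : G)) ⟨x, hx⟩

include hbot hx₀ in
lemma recFn_ne_bot (y : G) : recFn φ y ≠ ⊥ := by
  intro h
  have h1 := le_recFn φ x₀ hx₀ y
  rw [h] at h1
  have h2 : φ (x₀ + y) - φ x₀ = ⊥ := le_bot_iff.1 h1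
  rw [← EReal.coe_toReal hx₀ (hbot x₀)] at h2
  exact sub_coe_ne_bot _ (hbot _) _ h2

include hbot hx₀ in
lemma recFn_zero : recFn φ 0 = 0 := by
  apply le_antisymm
  · apply iSup_le
    rintro ⟨x, hx⟩
    rw [add_zero, ← EReal.coe_toReal hx (hbot x), ← EReal.coe_sub]
    simp
  · have := le_recFn φ x₀ hx₀ 0
    rw [add_zero, ← EReal.coe_toReal hx₀ (hbot x₀), ← EReal.coe_sub] at this
    simpa using this

include hbot hx₀ in
lemma phi_add_le (x y : G) : φ (x + y) ≤ φ x + recFn φ y := by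
  by_cases hx : φ x = ⊤
  · rw [hx, EReal.top_add_of_ne_bot (recFn_ne_bot φ hbot x₀ hx₀ y)]
    exact le_top
  · have h := le_recFn φ x hx y
    rw [EReal.sub_le_iff_le_add (Or.inl (hbot x)) (Or.inl hx)] at h
    exact h.trans_eq (add_comm _ _)


include hbot in
lemma recFn_smul_le_one (hconv : ConvexE G φ) {c : ℝ} (hc0 : 0 < c) (hc1 : c ≤ 1) (y : G) :
    recFn φ (c • y) ≤ (c : EReal) * recFn φ y := by
  apply iSup_le
  rintro ⟨x, hx⟩
  show φ (x + c • y) - φ x ≤ _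
  set r := (φ x).toReal with hrdef
  have hxr : φ x = (r : EReal) := (EReal.coe_toReal hx (hbot x)).symm
  have key : x + c • y = c • (x + y) + (1 - c) • x := by module
  have h1 : φ (x + c • y) ≤ (c : EReal) * φ (x + y) + (((1 - c) * r : ℝ) : EReal) := by
    rw [key]
    have := hconv (x + y) x c (1 - c) hc0.le (by linarith) (by ring)
    rwa [hxr, ← EReal.coe_mul] at this
  have h2 : φ (x + c • y) - (r : EReal)
      ≤ ((c : EReal) * φ (x + y) + (((1 - c) * r : ℝ) : EReal)) - (r : EReal) := by
    rw [sub_eq_add_neg, sub_eq_add_neg]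
    exact add_le_add_left h1 _
  have h3 : ∀ A : EReal, (c : EReal) * A + (((1 - c) * r : ℝ) : EReal) - (r : EReal)
      = (c : EReal) * (A - (r : EReal)) := by
    intro A
    induction A with
    | bot => rw [EReal.bot_sub, EReal.coe_mul_bot_of_pos hc0, EReal.bot_add, EReal.bot_sub]
    | coe a => norm_cast; ring
    | top =>
      rw [EReal.top_sub_coe, EReal.coe_mul_top_of_pos hc0,
        EReal.top_add_of_ne_bot (EReal.coe_ne_bot _), EReal.top_sub_coe]
  rw [hxr]
  refine h2.trans ?_
  rw [h3 (φ (x + y))]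
  refine mul_le_mul_of_nonneg_left ?_ (EReal.coe_nonneg.2 hc0.le)
  have h4 := le_recFn φ x hx y
  rwa [hxr] at h4

include hbot hx₀ in
lemma recFn_add_le (y z : G) : recFn φ (y + z) ≤ recFn φ y + recFn φ z := by
  apply iSup_le
  rintro ⟨x, hx⟩
  set r := (φ x).toReal with hrdef
  have hxr : φ x = (r : EReal) := (EReal.coe_toReal hx (hbot x)).symm
  by_cases hxy : φ (x + y) = ⊤
  · have h1 : recFn φ y = ⊤ := by
      apply top_le_iff.1
      have := le_recFn φ x hx y
      rwa [hxy, hxr, EReal.top_sub_coe] at this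
    rw [h1, EReal.top_add_of_ne_bot (recFn_ne_bot φ hbot x₀ hx₀ z)]
    exact le_top
  · set s := (φ (x + y)).toReal with hsdef
    have hxys : φ (x + y) = (s : EReal) := (EReal.coe_toReal hxy (hbot _)).symm
    have key : φ (x + (y + z)) - (r : EReal)
        = (φ ((x + y) + z) - (s : EReal)) + ((s - r : ℝ) : EReal) := by
      rw [add_assoc]
      exact sub_sub_chain _ s r
    have h2 : φ ((x + y) + z) - (s : EReal) ≤ recFn φ z := by
      have := le_recFn φ (x + y) hxy z
      rwa [hxys] at this
    have h3 : ((s - r : ℝ) : EReal) ≤ recFn φ y := by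
      have := le_recFn φ x hx y
      rwa [hxys, hxr, ← EReal.coe_sub] at this
    rw [hxr, key]
    exact (add_le_add h2 h3).trans_eq (add_comm _ _)

include hbot hx₀ in
lemma recFn_nsmul (hconv : ConvexE G φ) (y : G) : ∀ n : ℕ,
    recFn φ ((n : ℝ) • y) ≤ ((n : ℝ) : EReal) * recFn φ y := by
  intro n
  induction n with
  | zero => simp [recFn_zero φ hbot x₀ hx₀]
  | succ n ih =>
    have key : ((n + 1 : ℕ) : ℝ) • y = (n : ℝ) • y + y := by
      push_cast
      rw [add_smul, one_smul]
    rw [key]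
    refine (recFn_add_le φ hbot x₀ hx₀ _ _).trans ?_
    have h1 : recFn φ y = (1 : EReal) * recFn φ y := (one_mul _).symm
    calc recFn φ ((n : ℝ) • y) + recFn φ y
        ≤ ((n : ℝ) : EReal) * recFn φ y + (1 : EReal) * recFn φ y :=
          add_le_add ih (le_of_eq h1)
      _ = (((n : ℝ) : EReal) + 1) * recFn φ y :=
          (EReal.right_distrib_of_nonneg (by exact_mod_cast Nat.cast_nonneg n) zero_le_one).symm
      _ = (((n + 1 : ℕ) : ℝ) : EReal) * recFn φ y := by push_cast; norm_cast

include hbot hx₀ in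
lemma recFn_smul (hconv : ConvexE G φ) {c : ℝ} (hc : 0 ≤ c) (y : G) :
    recFn φ (c • y) ≤ (c : EReal) * recFn φ y := by
  rcases eq_or_lt_of_le hc with rfl | hc0
  · simp [recFn_zero φ hbot x₀ hx₀]
  · set n := ⌊c⌋₊ with hn
    set d := c - n with hd
    have hd0 : 0 ≤ d := by
      rw [hd]
      have := Nat.floor_le hc
      linarith
    have hd1 : d < 1 := by
      rw [hd]
      have := Nat.lt_floor_add_one c
      linarith
    have hcd : c = (n : ℝ) + d := by rw [hd]; ring
    have key : c • y = (n : ℝ) • y + d • y := by rw [hcd, add_smul]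
    have hdy : recFn φ (d • y) ≤ (d : EReal) * recFn φ y := by
      rcases eq_or_lt_of_le hd0 with h0 | h0
      · rw [← h0]
        simp [recFn_zero φ hbot x₀ hx₀]
      · exact recFn_smul_le_one φ hbot hconv h0 hd1.le y
    rw [key]
    refine (recFn_add_le φ hbot x₀ hx₀ _ _).trans ?_
    refine (add_le_add (recFn_nsmul φ hbot x₀ hx₀ hconv y n) hdy).trans ?_
    rw [← EReal.right_distrib_of_nonneg (by exact_mod_cast Nat.cast_nonneg n)
      (EReal.coe_nonneg.2 hd0)]
    rw [← EReal.coe_add, ← hcd]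

include hbot hx₀ in
lemma recFn_convex_comb (hconv : ConvexE G φ) {t s : ℝ} (ht : 0 ≤ t) (hs : 0 ≤ s)
    (y₁ y₂ : G) :
    recFn φ (t • y₁ + s • y₂) ≤ (t : EReal) * recFn φ y₁ + (s : EReal) * recFn φ y₂ :=
  (recFn_add_le φ hbot x₀ hx₀ _ _).trans
    (add_le_add (recFn_smul φ hbot x₀ hx₀ hconv ht y₁) (recFn_smul φ hbot x₀ hx₀ hconv hs y₂))

end recFn


section persp
variable {G : Type*} [AddCommGroup G] [Module ℝ G] (φ : G → EReal)
variable (hbot : ∀ x, φ x ≠ ⊥) (x₀ : G) (hx₀ : φ x₀ ≠ ⊤) (hconv : ConvexE G φ)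

lemma persp_pos {η : ℝ} (hη : 0 < η) (y : G) :
    persp φ (η, y) = (η : EReal) * φ (η⁻¹ • y) := if_pos hη

lemma persp_zero (y : G) : persp φ (0, y) = recFn φ y := by
  simp [persp]

lemma persp_neg {η : ℝ} (hη : η < 0) (y : G) : persp φ (η, y) = ⊤ := by
  simp [persp, not_lt.2 hη.le, hη.ne]

include hbot hx₀ in
lemma persp_ne_bot (p : ℝ × G) : persp φ p ≠ ⊥ := by
  obtain ⟨η, y⟩ := p
  rcases lt_trichotomy η 0 with h | rfl | h
  · rw [persp_neg φ h]; exact top_ne_bot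
  · rw [persp_zero]; exact recFn_ne_bot φ hbot x₀ hx₀ y
  · rw [persp_pos φ h]; exact coe_mul_ne_bot η h _ (hbot _)

include hbot hx₀ hconv in
/-- mixed-case auxiliary inequality -/
lemma persp_mixed {η₁ t s : ℝ} (hη₁ : 0 < η₁) (ht : 0 < t) (hs : 0 < s) (y₁ y₂ : G) :
    persp φ (t * η₁, t • y₁ + s • y₂)
      ≤ (t : EReal) * persp φ (η₁, y₁) + (s : EReal) * persp φ (0, y₂) := by
  have hη : 0 < t * η₁ := mul_pos ht hη₁
  rw [persp_pos φ hη, persp_pos φ hη₁, persp_zero]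
  have key : (t * η₁)⁻¹ • (t • y₁ + s • y₂)
      = η₁⁻¹ • y₁ + (s / (t * η₁)) • y₂ := by
    match_scalars <;> field_simp
  rw [key]
  have h1 : φ (η₁⁻¹ • y₁ + (s / (t * η₁)) • y₂)
      ≤ φ (η₁⁻¹ • y₁) + recFn φ ((s / (t * η₁)) • y₂) :=
    phi_add_le φ hbot x₀ hx₀ _ _
  have h2 : recFn φ ((s / (t * η₁)) • y₂)
      ≤ ((s / (t * η₁) : ℝ) : EReal) * recFn φ y₂ :=
    recFn_smul φ hbot x₀ hx₀ hconv (by positivity) y₂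
  calc ((t * η₁ : ℝ) : EReal) * φ (η₁⁻¹ • y₁ + (s / (t * η₁)) • y₂)
      ≤ ((t * η₁ : ℝ) : EReal) * (φ (η₁⁻¹ • y₁)
          + ((s / (t * η₁) : ℝ) : EReal) * recFn φ y₂) :=
        mul_le_mul_of_nonneg_left (h1.trans (add_le_add_right h2 _))
          (EReal.coe_nonneg.2 hη.le)
    _ = ((t * η₁ : ℝ) : EReal) * φ (η₁⁻¹ • y₁)
          + ((t * η₁ : ℝ) : EReal) * (((s / (t * η₁) : ℝ) : EReal) * recFn φ y₂) :=
        coe_mul_add _ hη.le _ _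
    _ = (t : EReal) * ((η₁ : EReal) * φ (η₁⁻¹ • y₁)) + (s : EReal) * recFn φ y₂ := by
        have hh : (t * η₁) * (s / (t * η₁)) = s := by field_simp
        have e1 : (t : EReal) * ((η₁ : EReal) * φ (η₁⁻¹ • y₁))
            = ((t * η₁ : ℝ) : EReal) * φ (η₁⁻¹ • y₁) := by
          rw [← mul_assoc, ← EReal.coe_mul]
        have e2 : ((t * η₁ : ℝ) : EReal) * (((s / (t * η₁) : ℝ) : EReal) * recFn φ y₂)
            = (s : EReal) * recFn φ y₂ := by
          rw [← mul_assoc, ← EReal.coe_mul, hh]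
        rw [e1, e2]

include hbot hx₀ hconv in
lemma persp_convex {η₁ η₂ t s : ℝ} (h1 : 0 ≤ η₁) (h2 : 0 ≤ η₂) (ht : 0 < t) (hs : 0 < s)
    (y₁ y₂ : G) :
    persp φ (t * η₁ + s * η₂, t • y₁ + s • y₂)
      ≤ (t : EReal) * persp φ (η₁, y₁) + (s : EReal) * persp φ (η₂, y₂) := by
  rcases eq_or_lt_of_le h1 with rfl | h1p
  · rcases eq_or_lt_of_le h2 with rfl | h2p
    · -- both zero
      simp only [mul_zero, add_zero, persp_zero]
      exact recFn_convex_comb φ hbot x₀ hx₀ hconv ht.le hs.le y₁ y₂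
    · -- η₁ = 0, η₂ > 0
      have h := persp_mixed φ hbot x₀ hx₀ hconv h2p hs ht y₂ y₁
      have e : t * 0 + s * η₂ = s * η₂ := by ring
      have e2 : t • y₁ + s • y₂ = s • y₂ + t • y₁ := add_comm _ _
      rw [e, e2]
      exact h.trans_eq (add_comm _ _)
  · rcases eq_or_lt_of_le h2 with rfl | h2p
    · -- η₂ = 0, η₁ > 0
      have h := persp_mixed φ hbot x₀ hx₀ hconv h1p ht hs y₁ y₂
      have e : t * η₁ + s * 0 = t * η₁ := by ring
      rw [e]
      exact h
    · -- both positive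
      have hη : 0 < t * η₁ + s * η₂ := by positivity
      set η := t * η₁ + s * η₂ with hηdef
      rw [persp_pos φ hη, persp_pos φ h1p, persp_pos φ h2p]
      set α := t * η₁ / η with hα
      set β := s * η₂ / η with hβ
      have hα0 : 0 ≤ α := by positivity
      have hβ0 : 0 ≤ β := by positivity
      have hαβ : α + β = 1 := by rw [hα, hβ]; field_simp; exact hηdef.symm
      have key : η⁻¹ • (t • y₁ + s • y₂)
          = α • (η₁⁻¹ • y₁) + β • (η₂⁻¹ • y₂) := by
        match_scalars
        · rw [hα]; field_simp
        · rw [hβ]; field_simp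
      rw [key]
      have h3 := hconv (η₁⁻¹ • y₁) (η₂⁻¹ • y₂) α β hα0 hβ0 hαβ
      calc (η : EReal) * φ (α • (η₁⁻¹ • y₁) + β • (η₂⁻¹ • y₂))
          ≤ (η : EReal) * ((α : EReal) * φ (η₁⁻¹ • y₁) + (β : EReal) * φ (η₂⁻¹ • y₂)) :=
            mul_le_mul_of_nonneg_left h3 (EReal.coe_nonneg.2 hη.le)
        _ = (η : EReal) * ((α : EReal) * φ (η₁⁻¹ • y₁))
              + (η : EReal) * ((β : EReal) * φ (η₂⁻¹ • y₂)) := coe_mul_add _ hη.le _ _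
        _ = (t : EReal) * ((η₁ : EReal) * φ (η₁⁻¹ • y₁))
              + (s : EReal) * ((η₂ : EReal) * φ (η₂⁻¹ • y₂)) := by
            have hα' : η * α = t * η₁ := by rw [hα]; field_simp
            have hβ' : η * β = s * η₂ := by rw [hβ]; field_simp
            have e1 : (η : EReal) * ((α : EReal) * φ (η₁⁻¹ • y₁))
                = (t : EReal) * ((η₁ : EReal) * φ (η₁⁻¹ • y₁)) := by
              rw [← mul_assoc, ← mul_assoc, ← EReal.coe_mul, ← EReal.coe_mul, hα']
            have e2 : (η : EReal) * ((β : EReal) * φ (η₂⁻¹ • y₂))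
                = (s : EReal) * ((η₂ : EReal) * φ (η₂⁻¹ • y₂)) := by
              rw [← mul_assoc, ← mul_assoc, ← EReal.coe_mul, ← EReal.coe_mul, hβ']
            rw [e1, e2]

end persp

section lsc
variable {G : Type*} [NormedAddCommGroup G] [NormedSpace ℝ G] (φ : G → EReal)
variable (hbot : ∀ x, φ x ≠ ⊥) (x₀ : G) (hx₀ : φ x₀ ≠ ⊤) (hconv : ConvexE G φ)
variable (hlsc : LowerSemicontinuous φ)

include hbot hlsc in
lemma persp_lscAt_pos {η₀ : ℝ} (hη₀ : 0 < η₀) (y₀ : G) :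
    LowerSemicontinuousAt (persp φ) (η₀, y₀) := by
  intro c hc
  rw [persp_pos φ hη₀] at hc
  obtain ⟨m, hm1, hm2⟩ : ∃ m : ℝ, (m : EReal) < φ (η₀⁻¹ • y₀) ∧ c < ((η₀ * m : ℝ) : EReal) := by
    rcases eq_or_ne (φ (η₀⁻¹ • y₀)) ⊤ with hT | hT
    · have hct : c < ⊤ := hc.trans_le le_top
      obtain ⟨u, hu1, hu2⟩ := EReal.exists_between_coe_real hct
      refine ⟨u / η₀, ?_, ?_⟩
      · rw [hT]; exact EReal.coe_lt_top _
      · rwa [mul_div_cancel₀ _ hη₀.ne']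
    · have hreal : φ (η₀⁻¹ • y₀) = ((φ (η₀⁻¹ • y₀)).toReal : EReal) :=
        (EReal.coe_toReal hT (hbot _)).symm
      set v := (φ (η₀⁻¹ • y₀)).toReal with hv
      rw [hreal, ← EReal.coe_mul] at hc
      obtain ⟨u, hu1, hu2⟩ := EReal.exists_between_coe_real hc
      have hu2' : u < η₀ * v := by exact_mod_cast hu2
      refine ⟨u / η₀, ?_, ?_⟩
      · rw [hreal]
        have : u / η₀ < v := by rw [div_lt_iff₀ hη₀]; nlinarith
        exact_mod_cast this
      · rwa [mul_div_cancel₀ _ hη₀.ne']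
  obtain ⟨c', hc1', hc2'⟩ := EReal.exists_between_coe_real hm2
  have hk : ContinuousAt (fun p : ℝ × G => p.1⁻¹ • p.2) (η₀, y₀) :=
    (continuousAt_fst.inv₀ hη₀.ne').smul continuousAt_snd
  have F1 : ∀ᶠ p : ℝ × G in nhds (η₀, y₀), (m : EReal) < φ (p.1⁻¹ • p.2) :=
    hk.eventually (hlsc (η₀⁻¹ • y₀) (m : EReal) hm1)
  have hc2'' : c' < η₀ * m := by exact_mod_cast hc2'
  have F2 : ∀ᶠ η : ℝ in nhds η₀, c' < η * m :=
    ((continuous_mul_right m).continuousAt).eventually (eventually_gt_nhds hc2'')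
  have F3 : ∀ᶠ η : ℝ in nhds η₀, 0 < η := eventually_gt_nhds hη₀
  filter_upwards [F1, continuousAt_fst.eventually F2, continuousAt_fst.eventually F3]
    with p h1 h2 h3
  have hP : persp φ p = (p.1 : EReal) * φ (p.1⁻¹ • p.2) := if_pos h3
  rw [hP]
  calc c < (c' : EReal) := hc1'
    _ < ((p.1 * m : ℝ) : EReal) := by exact_mod_cast h2
    _ = (p.1 : EReal) * (m : EReal) := EReal.coe_mul _ _
    _ ≤ (p.1 : EReal) * φ (p.1⁻¹ • p.2) :=
        mul_le_mul_of_nonneg_left h1.le (EReal.coe_nonneg.2 h3.le)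

include hbot hx₀ hconv hlsc in
lemma persp_lscAt_zero (y₀ : G) : LowerSemicontinuousAt (persp φ) (0, y₀) := by
  intro c hc
  rw [persp_zero] at hc
  rcases eq_or_ne c ⊥ with rfl | hcbot
  · exact Filter.Eventually.of_forall fun p =>
      bot_lt_iff_ne_bot.2 (persp_ne_bot φ hbot x₀ hx₀ p)
  have hcreal : c = (c.toReal : EReal) := (EReal.coe_toReal (hc.trans_le le_top).ne hcbot).symm
  set cr := c.toReal with hcr
  obtain ⟨x, hx, hxy⟩ : ∃ x, φ x ≠ ⊤ ∧ c < φ (x + y₀) - φ x := by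
    obtain ⟨⟨x, hx⟩, h⟩ := lt_iSup_iff.1 hc
    exact ⟨x, hx, h⟩
  have hxreal : φ x = ((φ x).toReal : EReal) := (EReal.coe_toReal hx (hbot x)).symm
  set r := (φ x).toReal with hrd
  have h1 : c + (r : EReal) < φ (x + y₀) := by
    rw [hxreal] at hxy
    exact (EReal.lt_sub_iff_add_lt (Or.inl (EReal.coe_ne_bot r))
      (Or.inl (EReal.coe_ne_top r))).1 hxy
  obtain ⟨q, hq1, hq2⟩ := EReal.exists_between_coe_real h1
  have hcrq : cr + r < q := by
    have h2 : ((cr + r : ℝ) : EReal) < (q : EReal) := by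
      rw [EReal.coe_add, ← hcreal]
      exact hq1
    exact_mod_cast h2
  set δ := q - r - cr with hδ
  have hδpos : 0 < δ := by rw [hδ]; linarith
  obtain ⟨ρ, hρpos, hρ⟩ : ∃ ρ > 0, ∀ z, dist z (x + y₀) < ρ → (q : EReal) < φ z := by
    have h3 := hlsc (x + y₀) (q : EReal) hq2
    rw [Metric.eventually_nhds_iff] at h3
    obtain ⟨ρ, h1', h2'⟩ := h3
    exact ⟨ρ, h1', fun z hz => h2' hz⟩
  set ε := min (min (1/2 : ℝ) (δ / (|r| + 1))) (ρ / (2 * (‖x‖ + 1))) with hε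
  have hεpos : 0 < ε := lt_min (lt_min (by norm_num) (by positivity)) (by positivity)
  have hmem : (Set.Iio ε ×ˢ Metric.ball y₀ (ρ / 2)) ∈ nhds ((0 : ℝ), y₀) :=
    prod_mem_nhds (Iio_mem_nhds hεpos) (Metric.ball_mem_nhds _ (by positivity))
  have hε1 : ε ≤ 1/2 := (min_le_left _ _).trans (min_le_left _ _)
  have hε2 : ε ≤ δ / (|r| + 1) := (min_le_left _ _).trans (min_le_right _ _)
  have hε3 : ε ≤ ρ / (2 * (‖x‖ + 1)) := min_le_right _ _
  filter_upwards [hmem] with p hp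
  obtain ⟨η, y⟩ := p
  obtain ⟨hpη, hpy⟩ := hp
  simp only [Set.mem_Iio] at hpη
  rw [Metric.mem_ball] at hpy
  rcases lt_trichotomy η 0 with hneg | rfl | hpos
  · rw [persp_neg φ hneg]
    exact hc.trans_le le_top
  · rw [persp_zero]
    have hqy : (q : EReal) < φ (x + y) := by
      apply hρ
      rw [dist_add_left]
      linarith
    have h3 : c < ((q - r : ℝ) : EReal) := by
      rw [hcreal]
      exact_mod_cast (by linarith : cr < q - r)
    refine h3.trans_le ?_
    have h4 : ((q - r : ℝ) : EReal) ≤ φ (x + y) - (r : EReal) := by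
      rw [EReal.coe_sub, sub_eq_add_neg, sub_eq_add_neg]
      exact add_le_add_left hqy.le _
    refine h4.trans ?_
    have h5 := le_recFn φ x hx y
    rwa [hxreal] at h5
  · have hη1 : η < 1 := by
      have := hpη.trans_le hε1
      linarith
    have hw : dist (y + (1 - η) • x) (x + y₀) < ρ := by
      have e : y + (1 - η) • x - (x + y₀) = (y - y₀) - η • x := by module
      rw [dist_eq_norm, e]
      have hb : ‖(y - y₀) - η • x‖ ≤ ‖y - y₀‖ + ‖η • x‖ := norm_sub_le _ _
      have hn : ‖η • x‖ = |η| * ‖x‖ := by rw [norm_smul, Real.norm_eq_abs]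
      have hηx : |η| * ‖x‖ < ρ / 2 := by
        rw [abs_of_pos hpos]
        have h6 : ε * (‖x‖ + 1) ≤ ρ / 2 := by
          have := (le_div_iff₀ (by positivity : (0:ℝ) < 2 * (‖x‖ + 1))).1 hε3
          nlinarith [norm_nonneg x]
        nlinarith [norm_nonneg x]
      rw [dist_eq_norm y y₀] at hpy
      linarith
    have hφw : (q : EReal) < φ (y + (1 - η) • x) := hρ _ hw
    have hcomb : φ (y + (1 - η) • x)
        ≤ (η : EReal) * φ (η⁻¹ • y) + (((1 - η) * r : ℝ) : EReal) := by
      have e : y + (1 - η) • x = η • (η⁻¹ • y) + (1 - η) • x := by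
        rw [smul_smul, mul_inv_cancel₀ hpos.ne', one_smul]
      rw [e]
      have h7 := hconv (η⁻¹ • y) x η (1 - η) hpos.le (by linarith) (by ring)
      rwa [hxreal, ← EReal.coe_mul] at h7
    set u := (1 - η) * r with hu
    have hA : ((q - u : ℝ) : EReal) < (η : EReal) * φ (η⁻¹ • y) := by
      by_contra hcon
      push_neg at hcon
      have h8 : φ (y + (1 - η) • x) ≤ ((q - u : ℝ) : EReal) + ((u : ℝ) : EReal) :=
        hcomb.trans (add_le_add_left hcon _)
      rw [← EReal.coe_add, sub_add_cancel] at h8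
      exact absurd (hφw.trans_le h8) (lt_irrefl _)
    have hfin : c < ((q - u : ℝ) : EReal) := by
      rw [hcreal]
      have hrabs : η * |r| < δ := by
        have h5' : η * (|r| + 1) < ε * (|r| + 1) := by nlinarith [abs_nonneg r]
        have h6' : ε * (|r| + 1) ≤ δ := (le_div_iff₀ (by positivity)).1 hε2
        nlinarith [abs_nonneg r]
      have h9 : cr < q - u := by
        have h10 : -(η * |r|) ≤ η * r := by nlinarith [neg_abs_le r]
        rw [hu]
        nlinarith
      exact_mod_cast h9
    rw [persp_pos φ hpos]
    exact hfin.trans hA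


include hbot hx₀ hconv hlsc in
lemma lsc_eta (y : G) : LowerSemicontinuous (fun η : ℝ => persp φ (η, y)) := by
  intro η₀
  rcases lt_trichotomy η₀ 0 with h | rfl | h
  · intro c hc
    filter_upwards [eventually_lt_nhds h] with η hη
    show c < persp φ (η, y)
    rw [persp_neg φ hη]
    have hc' : c < persp φ (η₀, y) := hc
    rw [persp_neg φ h] at hc'
    exact hc'
  · have hcont : ContinuousAt (fun η : ℝ => (η, y)) 0 :=
      (continuous_id.prodMk continuous_const).continuousAt
    exact (persp_lscAt_zero φ hbot x₀ hx₀ hconv hlsc y).comp (g := fun η : ℝ => (η, y)) hcont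
  · have hcont : ContinuousAt (fun η : ℝ => (η, y)) η₀ :=
      (continuous_id.prodMk continuous_const).continuousAt
    exact (persp_lscAt_pos φ hbot hlsc h y).comp (g := fun η : ℝ => (η, y)) hcont

end lsc

lemma exists_min_Icc (f : ℝ → EReal) (hf : LowerSemicontinuous f) {a b : ℝ} (hab : a ≤ b) :
    ∃ η ∈ Set.Icc a b, ∀ η' ∈ Set.Icc a b, f η ≤ f η' := by
  set m := ⨅ η ∈ Set.Icc a b, f η with hm
  rcases eq_or_ne m ⊤ with hT | hT
  · have h1 : ∀ η' ∈ Set.Icc a b, f η' = ⊤ := fun η' hη' =>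
      top_le_iff.1 (hT ▸ iInf₂_le η' hη')
    refine ⟨a, Set.left_mem_Icc.2 hab, fun η' hη' => ?_⟩
    rw [h1 η' hη']
    exact le_top
  · have hmlt : m < ⊤ := lt_top_iff_ne_top.2 hT
    set S : {t : EReal // m < t} → Set ℝ := fun t => Set.Icc a b ∩ f ⁻¹' Set.Iic t with hS
    have hne : Nonempty {t : EReal // m < t} := ⟨⟨⊤, hmlt⟩⟩
    have hSn : ∀ t, (S t).Nonempty := by
      rintro ⟨t, ht⟩
      rw [hm] at ht
      obtain ⟨η, hη⟩ := iInf_lt_iff.1 ht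
      obtain ⟨hη1, hη2⟩ := iInf_lt_iff.1 hη
      exact ⟨η, hη1, hη2.le⟩
    have hSc : ∀ t, IsClosed (S t) := fun t => isClosed_Icc.inter (hf.isClosed_preimage _)
    have hScomp : ∀ t, IsCompact (S t) := fun t =>
      isCompact_Icc.inter_right (hf.isClosed_preimage _)
    have hdir : Directed (· ⊇ ·) S := by
      rintro ⟨t₁, h₁⟩ ⟨t₂, h₂⟩
      refine ⟨⟨min t₁ t₂, lt_min h₁ h₂⟩, ?_, ?_⟩
      · intro η hη
        refine ⟨hη.1, ?_⟩
        have h3 : f η ≤ min t₁ t₂ := hη.2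
        exact h3.trans (min_le_left _ _)
      · intro η hη
        refine ⟨hη.1, ?_⟩
        have h3 : f η ≤ min t₁ t₂ := hη.2
        exact h3.trans (min_le_right _ _)
    obtain ⟨η, hη⟩ :=
      IsCompact.nonempty_iInter_of_directed_nonempty_isCompact_isClosed S hdir hSn hScomp hSc
    rw [Set.mem_iInter] at hη
    have hmem : η ∈ Set.Icc a b := (hη ⟨⊤, hmlt⟩).1
    refine ⟨η, hmem, fun η' hη' => ?_⟩
    have hfη : f η ≤ m := by
      apply le_of_forall_gt_imp_ge_of_dense
      intro t ht
      exact (hη ⟨t, ht⟩).2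
    exact hfη.trans (iInf₂_le η' hη')

end PM

open PM in
/-- the marginal `g(y) = inf_{η ∈ K} φ̃(η, y)` over a nonempty
closed bounded interval `K ⊂ [0,∞)` belongs to `Γ₀(𝒢)`. -/
theorem perspective_marginal
    {G : Type*} [NormedAddCommGroup G] [InnerProductSpace ℝ G] [CompleteSpace G]
    (φ : G → EReal) (hφ : Gamma0 G φ)
    (a b : ℝ) (ha : 0 ≤ a) (hab : a ≤ b)
    (g : G → EReal) (hg : g = fun y => ⨅ η ∈ Set.Icc a b, persp φ (η, y)) :
    Gamma0 G g := by
  obtain ⟨⟨hbot, x₀, hx₀⟩, hlsc, hconv⟩ := hφ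
  have hgy : ∀ y, ∃ η ∈ Set.Icc a b, g y = persp φ (η, y) := by
    intro y
    obtain ⟨η, hη, hmin'⟩ :=
      exists_min_Icc (fun η => persp φ (η, y)) (lsc_eta φ hbot x₀ hx₀ hconv hlsc y) hab
    refine ⟨η, hη, le_antisymm ?_ ?_⟩
    · rw [hg]; exact iInf₂_le η hη
    · rw [hg]; exact le_iInf₂ hmin'
  have hgbot : ∀ y, g y ≠ ⊥ := by
    intro y
    obtain ⟨η, hη, he⟩ := hgy y
    rw [he]
    exact persp_ne_bot φ hbot x₀ hx₀ _
  refine ⟨⟨hgbot, ?_⟩, ?_, ?_⟩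
  · -- exists y, g y ≠ ⊤
    rcases eq_or_lt_of_le (ha.trans hab) with hb0 | hb0
    · -- b = 0, hence a = 0
      have ha0 : a = 0 := le_antisymm (hab.trans hb0.symm.le) ha
      refine ⟨0, ?_⟩
      simp only [hg]
      have hK : Set.Icc a b = {(0 : ℝ)} := by rw [ha0, ← hb0]; exact Set.Icc_self 0
      rw [hK, iInf_singleton, persp_zero, recFn_zero φ hbot x₀ hx₀]
      simp
    · refine ⟨b • x₀, ?_⟩
      intro hTop
      have h1 : g (b • x₀) ≤ persp φ (b, b • x₀) := by
        rw [hg]; exact iInf₂_le b (Set.right_mem_Icc.2 hab)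
      have h2 : persp φ (b, b • x₀) = (b : EReal) * φ x₀ := by
        rw [persp_pos φ hb0, inv_smul_smul₀ hb0.ne']
      rw [hTop] at h1
      have h3 : persp φ (b, b • x₀) = ⊤ := top_le_iff.1 h1
      rw [h2] at h3
      exact coe_mul_ne_top b hb0 _ hx₀ h3
  · -- lower semicontinuity of g
    intro y₀ c hc
    obtain ⟨c', hcc', hc'g⟩ := exists_between hc
    have hcover : ∀ η ∈ Set.Icc a b, ∃ U ∈ nhds η, ∃ V ∈ nhds y₀,
        ∀ p : ℝ × G, p.1 ∈ U → p.2 ∈ V → c' < persp φ p := by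
      intro η hη
      have hηnn : 0 ≤ η := le_trans ha hη.1
      have hlscP : LowerSemicontinuousAt (persp φ) (η, y₀) := by
        rcases eq_or_lt_of_le hηnn with h0 | hpos
        · rw [← h0]
          exact persp_lscAt_zero φ hbot x₀ hx₀ hconv hlsc y₀
        · exact persp_lscAt_pos φ hbot hlsc hpos y₀
      have hval : c' < persp φ (η, y₀) := by
        refine lt_of_lt_of_le hc'g ?_
        rw [hg]
        exact iInf₂_le η hη
      have hev : {p : ℝ × G | c' < persp φ p} ∈ nhds (η, y₀) := hlscP c' hval
      rw [mem_nhds_prod_iff] at hev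
      obtain ⟨U, hU, V, hV, hUV⟩ := hev
      exact ⟨U, hU, V, hV, fun p h1 h2 => hUV (Set.mk_mem_prod h1 h2)⟩
    choose! U hU V hV hUV using hcover
    obtain ⟨T, hTcov⟩ := isCompact_Icc.elim_nhds_subcover' (fun η hη => U η)
      (fun η hη => hU η hη)
    have hV' : (⋂ η ∈ T, V (η : ℝ)) ∈ nhds y₀ := by
      rw [Filter.biInter_finset_mem]
      intro η hη
      exact hV (η : ℝ) η.2
    filter_upwards [hV'] with y hy
    show c < g y
    rw [hg]
    refine lt_of_lt_of_le hcc' (le_iInf₂ fun η hη => ?_)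
    have hcov := hTcov hη
    rw [Set.mem_iUnion₂] at hcov
    obtain ⟨ηi, hηiT, hηiU⟩ := hcov
    have hyV : y ∈ V (ηi : ℝ) := by
      rw [Set.mem_iInter₂] at hy
      exact hy ηi hηiT
    exact (hUV (ηi : ℝ) ηi.2 (η, y) hηiU hyV).le
  · -- convexity of g
    intro y₁ y₂ t s ht0 hs0 hts
    rcases eq_or_lt_of_le ht0 with ht0' | htpos
    · have hs1 : s = 1 := by linarith
      subst hs1
      rw [← ht0']
      simp
    rcases eq_or_lt_of_le hs0 with hs0' | hspos
    · have ht1 : t = 1 := by linarith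
      subst ht1
      rw [← hs0']
      simp
    rcases eq_or_ne (g y₁) ⊤ with hA | hA
    · rw [hA, EReal.coe_mul_top_of_pos htpos,
        EReal.top_add_of_ne_bot (coe_mul_ne_bot s hspos _ (hgbot y₂))]
      exact le_top
    rcases eq_or_ne (g y₂) ⊤ with hB | hB
    · rw [hB, EReal.coe_mul_top_of_pos hspos,
        EReal.add_top_of_ne_bot (coe_mul_ne_bot t htpos _ (hgbot y₁))]
      exact le_top
    have hAr : g y₁ = ((g y₁).toReal : EReal) := (EReal.coe_toReal hA (hgbot y₁)).symm
    have hBr : g y₂ = ((g y₂).toReal : EReal) := (EReal.coe_toReal hB (hgbot y₂)).symm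
    set Ar := (g y₁).toReal with hArd
    set Br := (g y₂).toReal with hBrd
    have key : ∀ ε : ℝ, 0 < ε →
        g (t • y₁ + s • y₂) ≤ ((t * Ar + s * Br + ε : ℝ) : EReal) := by
      intro ε hε
      have hlt1 : g y₁ < ((Ar + ε : ℝ) : EReal) := by
        rw [hAr]
        exact_mod_cast (by linarith : Ar < Ar + ε)
      have hlt2 : g y₂ < ((Br + ε : ℝ) : EReal) := by
        rw [hBr]
        exact_mod_cast (by linarith : Br < Br + ε)
      rw [hg] at hlt1 hlt2
      obtain ⟨η₁, h₁⟩ := iInf_lt_iff.1 hlt1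
      obtain ⟨hη₁K, hP₁⟩ := iInf_lt_iff.1 h₁
      obtain ⟨η₂, h₂⟩ := iInf_lt_iff.1 hlt2
      obtain ⟨hη₂K, hP₂⟩ := iInf_lt_iff.1 h₂
      have hmemK : t * η₁ + s * η₂ ∈ Set.Icc a b := by
        constructor
        · nlinarith [hη₁K.1, hη₂K.1]
        · nlinarith [hη₁K.2, hη₂K.2]
      have step1 : g (t • y₁ + s • y₂) ≤ persp φ (t * η₁ + s * η₂, t • y₁ + s • y₂) := by
        rw [hg]
        exact iInf₂_le _ hmemK
      have step2 := persp_convex φ hbot x₀ hx₀ hconv (le_trans ha hη₁K.1)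
        (le_trans ha hη₂K.1) htpos hspos y₁ y₂
      refine step1.trans (step2.trans ?_)
      have m1 : (t : EReal) * persp φ (η₁, y₁) ≤ (t : EReal) * ((Ar + ε : ℝ) : EReal) :=
        mul_le_mul_of_nonneg_left hP₁.le (EReal.coe_nonneg.2 htpos.le)
      have m2 : (s : EReal) * persp φ (η₂, y₂) ≤ (s : EReal) * ((Br + ε : ℝ) : EReal) :=
        mul_le_mul_of_nonneg_left hP₂.le (EReal.coe_nonneg.2 hspos.le)
      refine (add_le_add m1 m2).trans_eq ?_
      rw [← EReal.coe_mul, ← EReal.coe_mul, ← EReal.coe_add]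
      norm_cast
      linear_combination ε * hts
    have final : g (t • y₁ + s • y₂) ≤ ((t * Ar + s * Br : ℝ) : EReal) := by
      by_contra hcon
      push_neg at hcon
      obtain ⟨u, hu1, hu2⟩ := EReal.exists_between_coe_real hcon
      have hu1' : t * Ar + s * Br < u := by exact_mod_cast hu1
      have hk := key (u - (t * Ar + s * Br)) (by linarith)
      rw [show t * Ar + s * Br + (u - (t * Ar + s * Br)) = u by ring] at hk
      exact absurd (hk.trans_lt hu2) (lt_irrefl _)
    refine final.trans_eq ?_
    rw [hAr, hBr, ← EReal.coe_mul, ← EReal.coe_mul, ← EReal.coe_add]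


end
end

section
/- Let 𝒢 be a real Hilbert space, let ψ ∈ Γ₀(𝒢), and let env(ψ*) and env ψ denote the Moreau envelopes of ψ* and ψ respectively. Define g : ℝ × 𝒢 → (-∞, +∞] by g(η, y) = ‖y‖²/(2η) − η (env ψ)(y/η) if η > 0; g(0, y) = σ_{dom ψ}(y); g(η, y) = +∞ if η < 0. Then g equals the perspective of env(ψ*) and g ∈ Γ₀(ℝ ⊕ 𝒢). -/
open scoped RealInnerProductSpace Classical

noncomputable section

/-- The Moreau envelope `env f : u ↦ inf_v (f(v) + ‖u − v‖²/2)`. -/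
def moreauEnv {G : Type*} [NormedAddCommGroup G] (f : G → EReal) (u : G) : EReal :=
  ⨅ v : G, (f v + ((‖u - v‖ ^ 2 / 2 : ℝ) : EReal))


namespace P17

/-- basic EReal helpers -/
lemma coe_le_of_forall_eps {a : ℝ} {X : EReal} (h : ∀ ε : ℝ, 0 < ε → ((a - ε : ℝ) : EReal) ≤ X) :
    (a : EReal) ≤ X := by
  refine EReal.ge_of_forall_gt_iff_ge.1 fun z hz => ?_
  have hz' : z < a := by exact_mod_cast hz
  have := h (a - z) (by linarith)
  simpa [show a - (a - z) = z by ring] using this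

lemma coe_lt_add_coe_iff {r a : ℝ} {X : EReal} : (r : EReal) < X + (a : EReal) ↔ ((r - a : ℝ) : EReal) < X := by
  induction X using EReal.rec with
  | bot => simp [EReal.bot_add]
  | top =>
    simp only [EReal.top_add_of_ne_bot (EReal.coe_ne_bot a)]
    constructor
    · intro _; exact_mod_cast EReal.coe_lt_top (r - a)
    · intro _; exact EReal.coe_lt_top r
  | coe x =>
    rw [← EReal.coe_add, EReal.coe_lt_coe_iff, EReal.coe_lt_coe_iff]
    constructor <;> intro <;> linarith

lemma add_coe_le_coe_iff {r a : ℝ} {X : EReal} : X + (a : EReal) ≤ (r : EReal) ↔ X ≤ ((r - a : ℝ) : EReal) := by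
  rw [← not_lt, ← not_lt, coe_lt_add_coe_iff]



lemma lsc_add_cont {G : Type*} [TopologicalSpace G] {ψ : G → EReal}
    (hψ : LowerSemicontinuous ψ) (hbot : ∀ x, ψ x ≠ ⊥) {a : G → ℝ} (ha : Continuous a) :
    LowerSemicontinuous fun x => ψ x + ((a x : ℝ) : EReal) := by
  intro x c hc
  induction c using EReal.rec with
  | bot =>
    filter_upwards with z
    exact EReal.bot_lt_add_iff.2 ⟨bot_lt_iff_ne_bot.2 (hbot z), bot_lt_iff_ne_bot.2 (EReal.coe_ne_bot _)⟩
  | top => exact absurd hc (not_top_lt)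
  | coe c =>
    simp only [gt_iff_lt, coe_lt_add_coe_iff] at hc
    obtain ⟨z, hz1, hz2⟩ := exists_between hc
    have hzbot : z ≠ ⊥ := fun h => by simp [h] at hz1
    have hztop : z ≠ ⊤ := fun h => by rw [h] at hz2; exact absurd hz2 not_top_lt
    set ρ : ℝ := z.toReal with hρ
    have hzρ : (ρ : EReal) = z := EReal.coe_toReal hztop hzbot
    have h1 : c - a x < ρ := by
      rw [← EReal.coe_lt_coe_iff, hzρ]; exact hz1
    have hev1 : ∀ᶠ w in nhds x, (ρ : EReal) < ψ w := hψ x ρ (hzρ ▸ hz2)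
    have hev2 : ∀ᶠ w in nhds x, c - ρ < a w :=
      (ha.tendsto x).eventually (eventually_gt_nhds (by linarith))
    filter_upwards [hev1, hev2] with w hw1 hw2
    have : ((c : ℝ) : EReal) = ((ρ : ℝ) : EReal) + ((c - ρ : ℝ) : EReal) := by
      rw [← EReal.coe_add]; norm_num
    rw [this]
    exact EReal.add_lt_add hw1 (by exact_mod_cast hw2)

lemma exists_affine_minorant {G : Type*} [NormedAddCommGroup G] [InnerProductSpace ℝ G]
    [CompleteSpace G] {ψ : G → EReal} (hψ : Gamma0 G ψ) :
    ∃ (v₀ : G) (β : ℝ), ∀ x, ((⟪x, v₀⟫ + β : ℝ) : EReal) ≤ ψ x := by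
  obtain ⟨⟨hbot, x₀, hx₀⟩, hlsc, hconv⟩ := hψ
  have hx₀r : ((ψ x₀).toReal : EReal) = ψ x₀ := EReal.coe_toReal hx₀ (hbot x₀)
  set r₀ : ℝ := (ψ x₀).toReal with hr₀
  set S : Set (G × ℝ) := {p : G × ℝ | ψ p.1 ≤ (p.2 : EReal)} with hS
  have hconvS : Convex ℝ S := by
    rintro ⟨px, pt⟩ hp ⟨qx, qt⟩ hq a b ha hb hab
    simp only [hS, Set.mem_setOf_eq] at hp hq ⊢
    have h1 : ψ (a • px + b • qx) ≤ (a : EReal) * ψ px + (b : EReal) * ψ qx :=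
      hconv px qx a b ha hb hab
    have h2 : (a : EReal) * ψ px ≤ (a : EReal) * ((pt : ℝ) : EReal) :=
      mul_le_mul_of_nonneg_left hp (by exact_mod_cast ha)
    have h3 : (b : EReal) * ψ qx ≤ (b : EReal) * ((qt : ℝ) : EReal) :=
      mul_le_mul_of_nonneg_left hq (by exact_mod_cast hb)
    have h4 : (a : EReal) * ((pt : ℝ) : EReal) + (b : EReal) * ((qt : ℝ) : EReal)
        = ((a * pt + b * qt : ℝ) : EReal) := by
      rw [← EReal.coe_mul, ← EReal.coe_mul, ← EReal.coe_add]
    calc ψ ((a • (px, pt) + b • (qx, qt)).1) = ψ (a • px + b • qx) := by rfl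
      _ ≤ (a : EReal) * ψ px + (b : EReal) * ψ qx := h1
      _ ≤ ((a * pt + b * qt : ℝ) : EReal) := by rw [← h4]; exact add_le_add h2 h3
      _ = (((a • (px, pt) + b • (qx, qt)).2 : ℝ) : EReal) := by rfl
  have hclosedS : IsClosed S := by
    rw [← isOpen_compl_iff, isOpen_iff_mem_nhds]
    rintro ⟨px, pt⟩ hp
    have hp' : ((pt : ℝ) : EReal) < ψ px := not_le.1 hp
    obtain ⟨z, hz1, hz2⟩ := exists_between hp'
    have hzbot : z ≠ ⊥ := fun h => by simp [h] at hz1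
    have hztop : z ≠ ⊤ := fun h => by rw [h] at hz2; exact absurd hz2 not_top_lt
    set ρ : ℝ := z.toReal with hρ
    have hzρ : (ρ : EReal) = z := EReal.coe_toReal hztop hzbot
    have hev1 : ∀ᶠ w in nhds px, (ρ : EReal) < ψ w := hlsc px ρ (hzρ ▸ hz2)
    have hev2 : Set.Iio ρ ∈ nhds pt := Iio_mem_nhds (by rw [← EReal.coe_lt_coe_iff, hzρ]; exact hz1)
    rw [nhds_prod_eq]
    refine Filter.mem_of_superset (Filter.prod_mem_prod hev1 hev2) ?_
    rintro ⟨wx, wt⟩ ⟨h1, h2⟩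
    simp only [hS, Set.mem_compl_iff, Set.mem_setOf_eq, not_le]
    exact lt_trans (by exact_mod_cast h2) h1
  have hnotin : (x₀, r₀ - 1) ∉ S := by
    simp only [hS, Set.mem_setOf_eq, not_le]
    rw [← hx₀r]
    exact_mod_cast sub_one_lt r₀
  obtain ⟨f, u, hfS, hfx⟩ := geometric_hahn_banach_closed_point hconvS hclosedS hnotin
  set l : G →L[ℝ] ℝ := f.comp (ContinuousLinearMap.inl ℝ G ℝ) with hl
  set c : ℝ := f ((0 : G), (1 : ℝ)) with hc
  have hdec : ∀ x : G, ∀ t : ℝ, f (x, t) = l x + t * c := by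
    intro x t
    have : ((x, t) : G × ℝ) = (x, 0) + t • ((0 : G), (1 : ℝ)) := by
      simp [Prod.ext_iff]
    rw [this, map_add, map_smul]
    simp [hl, hc, ContinuousLinearMap.inl]
  have hmem : ∀ x : G, ∀ s : ℝ, ψ x ≤ (s : EReal) → l x + s * c < u := by
    intro x s hx
    have := hfS (x, s) hx
    rwa [hdec] at this
  have hx₀mem : ∀ t : ℝ, r₀ ≤ t → l x₀ + t * c < u := fun t ht =>
    hmem x₀ t (by rw [← hx₀r]; exact_mod_cast ht)
  have hcneg : c < 0 := by
    rcases lt_trichotomy c 0 with h | h | h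
    · exact h
    · exfalso
      have h1 := hx₀mem r₀ le_rfl
      have h2 : u < l x₀ + (r₀ - 1) * c := by rw [← hdec]; exact hfx
      rw [h] at h1 h2; simp at h1 h2; linarith
    · exfalso
      have h1 := hx₀mem (max r₀ ((u - l x₀) / c + 1)) (le_max_left _ _)
      have h2 : (u - l x₀) / c + 1 ≤ max r₀ ((u - l x₀) / c + 1) := le_max_right _ _
      have h3 : (u - l x₀) / c * c = u - l x₀ := div_mul_cancel₀ _ (ne_of_gt h)
      nlinarith [mul_le_mul_of_nonneg_right h2 (le_of_lt h)]
  set a : G := (InnerProductSpace.toDual ℝ G).symm l with ha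
  have hla : ∀ x : G, l x = ⟪x, a⟫ := by
    intro x
    rw [real_inner_comm]
    exact (InnerProductSpace.toDual_symm_apply).symm
  refine ⟨(-c)⁻¹ • a, (u / c : ℝ), fun x => ?_⟩
  rcases eq_or_ne (ψ x) ⊤ with h | h
  · rw [h]; exact le_top
  · have hxr : ((ψ x).toReal : EReal) = ψ x := EReal.coe_toReal h (hbot x)
    have := hmem x (ψ x).toReal (by rw [hxr])
    rw [← hxr, EReal.coe_le_coe_iff]
    have hinner : ⟪x, (-c)⁻¹ • a⟫ = (-c)⁻¹ * l x := by
      rw [real_inner_smul_right, hla]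
    rw [hinner]
    have hc' : (0 : ℝ) < -c := by linarith
    rw [← mul_le_mul_iff_of_pos_right hc']
    have e1 : ((-c)⁻¹ * l x + u / c) * (-c) = l x - u := by
      have hcne : c ≠ 0 := ne_of_lt hcneg
      field_simp
      ring
    rw [e1]
    nlinarith [this]

lemma le_of_forall_le_add_lin {A B C : ℝ} (h : ∀ t : ℝ, 0 < t → t ≤ 1 → A ≤ B + t * C) :
    A ≤ B := by
  by_contra hAB
  push_neg at hAB
  rcases le_or_gt C 0 with hC | hC
  · have := h 1 one_pos le_rfl
    nlinarith
  · have ht1 : (0 : ℝ) < min 1 ((A - B) / (2 * C)) := by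
      apply lt_min one_pos
      apply div_pos (by linarith) (by linarith)
    have := h _ ht1 (min_le_left _ _)
    have h2 : min 1 ((A - B) / (2 * C)) * C ≤ (A - B) / (2 * C) * C :=
      mul_le_mul_of_nonneg_right (min_le_right _ _) (le_of_lt hC)
    have h3 : (A - B) / (2 * C) * C = (A - B) / 2 := by
      field_simp
    nlinarith

lemma prox_exists {G : Type*} [NormedAddCommGroup G] [InnerProductSpace ℝ G] [CompleteSpace G]
    {ψ : G → EReal} (hψ : Gamma0 G ψ) (w : G) {m : ℝ} (hm : moreauEnv ψ w = (m : EReal)) :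
    ∃ p : G, ψ p + ((‖w - p‖ ^ 2 / 2 : ℝ) : EReal) = (m : EReal) ∧
      ∀ z : G, ψ p + ((⟪z - p, w - p⟫ : ℝ) : EReal) ≤ ψ z := by
  obtain ⟨⟨hbot, _⟩, hlsc, hconv⟩ := hψ
  set F : G → EReal := fun x => ψ x + ((‖w - x‖ ^ 2 / 2 : ℝ) : EReal) with hF
  have hFm : ⨅ x, F x = (m : EReal) := hm
  have hFlsc : LowerSemicontinuous F :=
    lsc_add_cont hlsc hbot (by fun_prop)
  have hlow : ∀ x, (m : EReal) ≤ F x := fun x => hFm ▸ iInf_le F x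
  -- minimizing sequence
  have hseq : ∀ n : ℕ, ∃ x : G, F x < ((m + 1 / (n + 1) : ℝ) : EReal) := by
    intro n
    rw [← iInf_lt_iff, hFm, EReal.coe_lt_coe_iff]
    have : (0 : ℝ) < 1 / (n + 1) := by positivity
    linarith
  choose x hx using hseq
  -- real values
  have hψx : ∀ n, ψ (x n) ≠ ⊤ := by
    intro n h
    have := hx n
    rw [hF] at this
    simp only [h, EReal.top_add_of_ne_bot (EReal.coe_ne_bot _)] at this
    exact absurd this not_top_lt
  set p_ : ℕ → ℝ := fun n => (ψ (x n)).toReal with hp_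
  have hψxr : ∀ n, ψ (x n) = ((p_ n : ℝ) : EReal) := fun n =>
    (EReal.coe_toReal (hψx n) (hbot (x n))).symm
  have hFr : ∀ n, F (x n) = ((p_ n + ‖w - x n‖ ^ 2 / 2 : ℝ) : EReal) := by
    intro n; rw [hF]; simp only [hψxr n, ← EReal.coe_add]
  have hup : ∀ n, p_ n + ‖w - x n‖ ^ 2 / 2 < m + 1 / (n + 1) := by
    intro n
    have := hx n; rw [hFr n, EReal.coe_lt_coe_iff] at this; exact this
  have hdown : ∀ n, m ≤ p_ n + ‖w - x n‖ ^ 2 / 2 := by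
    intro n
    have := hlow (x n); rw [hFr n, EReal.coe_le_coe_iff] at this; exact this
  -- quadratic estimate
  have hquad : ∀ n k : ℕ, ‖x n - x k‖ ^ 2 ≤ 4 * ((1 : ℝ) / (n + 1) + 1 / (k + 1)) := by
    intro n k
    have hmid := hconv (x n) (x k) (1/2) (1/2) (by norm_num) (by norm_num) (by norm_num)
    have hmid2 : ψ ((1/2 : ℝ) • x n + (1/2 : ℝ) • x k)
        ≤ ((p_ n / 2 + p_ k / 2 : ℝ) : EReal) := by
      refine le_trans hmid (le_of_eq ?_)
      have he : (1/2 : ℝ) * p_ n + 1/2 * p_ k = p_ n / 2 + p_ k / 2 := by ring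
      rw [hψxr n, hψxr k, ← EReal.coe_mul, ← EReal.coe_mul, ← EReal.coe_add, he]
    set mid := (1/2 : ℝ) • x n + (1/2 : ℝ) • x k with hmiddef
    have hlowm := hlow mid
    have hFmid : F mid ≤ ((p_ n / 2 + p_ k / 2 + ‖w - mid‖ ^ 2 / 2 : ℝ) : EReal) := by
      rw [hF]
      calc ψ mid + ((‖w - mid‖ ^ 2 / 2 : ℝ) : EReal)
          ≤ ((p_ n / 2 + p_ k / 2 : ℝ) : EReal) + ((‖w - mid‖ ^ 2 / 2 : ℝ) : EReal) :=
            add_le_add hmid2 le_rfl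
        _ = ((p_ n / 2 + p_ k / 2 + ‖w - mid‖ ^ 2 / 2 : ℝ) : EReal) := by
            rw [← EReal.coe_add]
    have hreal : m ≤ p_ n / 2 + p_ k / 2 + ‖w - mid‖ ^ 2 / 2 := by
      have := le_trans hlowm hFmid
      exact EReal.coe_le_coe_iff.1 this
    -- parallelogram
    have hwmid : w - mid = (1/2 : ℝ) • ((w - x n) + (w - x k)) := by
      rw [hmiddef]; module
    have hnorm : ‖w - mid‖ ^ 2 = ‖(w - x n) + (w - x k)‖ ^ 2 / 4 := by
      rw [hwmid, norm_smul]
      simp [mul_pow]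
      ring
    have hpar := parallelogram_law_with_norm ℝ (w - x n) (w - x k)
    have hdiff : (w - x n) - (w - x k) = x k - x n := by abel
    rw [hdiff] at hpar
    have hnormsub : ‖x k - x n‖ = ‖x n - x k‖ := norm_sub_rev _ _
    have hpar2 : ‖w - x n + (w - x k)‖ ^ 2 + ‖x n - x k‖ ^ 2
        = 2 * (‖w - x n‖ ^ 2 + ‖w - x k‖ ^ 2) := by
      simp only [pow_two]
      rw [← hnormsub]
      simpa only [pow_two] using hpar
    have h1 := hup n
    have h2 := hup k
    nlinarith [hreal, hpar2, hnorm, hdown n, hdown k]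
  -- Cauchy
  have hcauchy : CauchySeq x := by
    refine cauchySeq_of_le_tendsto_0 (fun N : ℕ => Real.sqrt (8 / (N + 1))) ?_ ?_
    · intro n k N hn hk
      rw [dist_eq_norm]
      have h1 : (1 : ℝ) / (n + 1) ≤ 1 / (N + 1) := by
        apply one_div_le_one_div_of_le (by positivity)
        exact_mod_cast Nat.succ_le_succ hn
      have h2 : (1 : ℝ) / (k + 1) ≤ 1 / (N + 1) := by
        apply one_div_le_one_div_of_le (by positivity)
        exact_mod_cast Nat.succ_le_succ hk
      have h3 : ‖x n - x k‖ ^ 2 ≤ 8 / (N + 1) := by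
        have := hquad n k
        calc ‖x n - x k‖ ^ 2 ≤ 4 * ((1 : ℝ) / (n + 1) + 1 / (k + 1)) := this
          _ ≤ 4 * ((1 : ℝ) / (N + 1) + 1 / (N + 1)) := by linarith
          _ = 8 / (N + 1) := by ring
      calc ‖x n - x k‖ = Real.sqrt (‖x n - x k‖ ^ 2) := by
            rw [Real.sqrt_sq (norm_nonneg _)]
        _ ≤ Real.sqrt (8 / (N + 1)) := Real.sqrt_le_sqrt h3
    · have h0 : Filter.Tendsto (fun N : ℕ => (8 : ℝ) / (N + 1)) Filter.atTop (nhds 0) := by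
        exact (tendsto_const_div_atTop_nhds_zero_nat 8).comp (Filter.tendsto_add_atTop_nat 1)
          |>.congr (by intro n; simp)
      have h1 := (Real.continuous_sqrt.tendsto' 0 0 (by simp)).comp h0
      exact h1
  obtain ⟨p, hp⟩ := cauchySeq_tendsto_of_complete hcauchy
  -- F p ≤ m via lsc
  have hFp : F p = (m : EReal) := by
    refine le_antisymm ?_ (hlow p)
    by_contra hlt
    push_neg at hlt
    obtain ⟨z, hz1, hz2⟩ := exists_between hlt
    have hzbot : z ≠ ⊥ := fun h => by simp [h] at hz1
    have hztop : z ≠ ⊤ := fun h => by rw [h] at hz2; exact absurd hz2 not_top_lt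
    set μ : ℝ := z.toReal with hμ
    have hzμ : (μ : EReal) = z := EReal.coe_toReal hztop hzbot
    have hmμ : m < μ := by rw [← EReal.coe_lt_coe_iff, hzμ]; exact hz1
    have hev : ∀ᶠ v in nhds p, (μ : EReal) < F v := hFlsc p μ (hzμ ▸ hz2)
    have hev2 : ∀ᶠ n in Filter.atTop, (μ : EReal) < F (x n) := hp.eventually hev
    have hev3 : ∀ᶠ n : ℕ in Filter.atTop, (1 : ℝ) / (n + 1) < μ - m := by
      have h0 : Filter.Tendsto (fun n : ℕ => (1 : ℝ) / (n + 1)) Filter.atTop (nhds 0) := by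
        exact (tendsto_const_div_atTop_nhds_zero_nat 1).comp (Filter.tendsto_add_atTop_nat 1)
          |>.congr (by intro n; simp)
      exact h0.eventually (eventually_lt_nhds (by linarith))
    obtain ⟨n, h1, h2⟩ := (hev2.and hev3).exists
    have h3 := hx n
    have : ((μ : ℝ) : EReal) < ((m + 1 / (n + 1) : ℝ) : EReal) := lt_trans h1 h3
    rw [EReal.coe_lt_coe_iff] at this
    linarith
  -- properties of p
  have hψp : ψ p ≠ ⊤ := by
    intro h
    rw [hF] at hFp
    simp only [h, EReal.top_add_of_ne_bot (EReal.coe_ne_bot _)] at hFp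
    exact EReal.coe_ne_top m hFp.symm
  set pR : ℝ := (ψ p).toReal with hpRdef
  have hψpr : ψ p = ((pR : ℝ) : EReal) := (EReal.coe_toReal hψp (hbot p)).symm
  have hpm : pR + ‖w - p‖ ^ 2 / 2 = m := by
    have : F p = ((pR + ‖w - p‖ ^ 2 / 2 : ℝ) : EReal) := by
      rw [hF]; simp only [hψpr, ← EReal.coe_add]
    rw [this] at hFp
    exact_mod_cast hFp
  refine ⟨p, by rw [hψpr, ← EReal.coe_add]; exact_mod_cast hpm, ?_⟩
  intro z
  rcases eq_or_ne (ψ z) ⊤ with hz | hz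
  · rw [hz]; exact le_top
  · have hψzr : ψ z = (((ψ z).toReal : ℝ) : EReal) := (EReal.coe_toReal hz (hbot z)).symm
    set zR : ℝ := (ψ z).toReal
    rw [hψpr, hψzr, ← EReal.coe_add, EReal.coe_le_coe_iff]
    -- real goal : pR + ⟪z - p, w - p⟫ ≤ zR
    have key : ∀ t : ℝ, 0 < t → t ≤ 1 →
        ⟪z - p, w - p⟫ ≤ (zR - pR) + t * (‖z - p‖ ^ 2 / 2) := by
      intro t ht0 ht1
      have hcvx := hconv z p t (1 - t) (le_of_lt ht0) (by linarith) (by ring)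
      have hcvx2 : ψ (t • z + (1 - t) • p) ≤ ((t * zR + (1 - t) * pR : ℝ) : EReal) := by
        refine le_trans hcvx ?_
        rw [hψzr, hψpr, ← EReal.coe_mul, ← EReal.coe_mul, ← EReal.coe_add]
      set v := t • z + (1 - t) • p with hv
      have hlowv := hlow v
      have hFv : F v ≤ ((t * zR + (1 - t) * pR + ‖w - v‖ ^ 2 / 2 : ℝ) : EReal) := by
        rw [hF]
        calc ψ v + ((‖w - v‖ ^ 2 / 2 : ℝ) : EReal)
            ≤ ((t * zR + (1 - t) * pR : ℝ) : EReal) + ((‖w - v‖ ^ 2 / 2 : ℝ) : EReal) :=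
              add_le_add hcvx2 le_rfl
          _ = _ := by rw [← EReal.coe_add]
      have hreal : m ≤ t * zR + (1 - t) * pR + ‖w - v‖ ^ 2 / 2 :=
        EReal.coe_le_coe_iff.1 (le_trans hlowv hFv)
      have hwv : w - v = (w - p) - t • (z - p) := by rw [hv]; module
      have hexp : ‖w - v‖ ^ 2 = ‖w - p‖ ^ 2 - 2 * t * ⟪w - p, z - p⟫ + t ^ 2 * ‖z - p‖ ^ 2 := by
        rw [hwv, norm_sub_sq_real, real_inner_smul_right, norm_smul]
        simp [mul_pow]
        ring
      rw [hexp] at hreal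
      rw [real_inner_comm (w - p) (z - p)]
      have hm' : m = pR + ‖w - p‖ ^ 2 / 2 := hpm.symm
      nlinarith
    have := le_of_forall_le_add_lin key
    linarith

lemma env_real {G : Type*} [NormedAddCommGroup G] [InnerProductSpace ℝ G] [CompleteSpace G]
    {ψ : G → EReal} (hψ : Gamma0 G ψ) (w : G) :
    ∃ m : ℝ, moreauEnv ψ w = (m : EReal) := by
  obtain ⟨v₀, β, hmin⟩ := exists_affine_minorant hψ
  obtain ⟨⟨hbot, x₀, hx₀⟩, hlsc, hconv⟩ := hψ
  have hx₀r : ((ψ x₀).toReal : EReal) = ψ x₀ := EReal.coe_toReal hx₀ (hbot x₀)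
  have htop : moreauEnv ψ w ≠ ⊤ := by
    intro h
    have h1 : moreauEnv ψ w ≤ ψ x₀ + ((‖w - x₀‖ ^ 2 / 2 : ℝ) : EReal) := iInf_le _ x₀
    rw [h, ← hx₀r, ← EReal.coe_add, top_le_iff] at h1
    exact EReal.coe_ne_top _ h1
  have hbotlb : ((⟪w, v₀⟫ - ‖v₀‖ ^ 2 / 2 + β : ℝ) : EReal) ≤ moreauEnv ψ w := by
    refine le_iInf fun v => ?_
    have h1 : ((⟪v, v₀⟫ + β : ℝ) : EReal) ≤ ψ v := hmin v
    have h2 : ((⟪v, v₀⟫ + β + ‖w - v‖ ^ 2 / 2 : ℝ) : EReal)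
        ≤ ψ v + ((‖w - v‖ ^ 2 / 2 : ℝ) : EReal) := by
      rw [EReal.coe_add (⟪v, v₀⟫ + β) (‖w - v‖ ^ 2 / 2)]
      exact add_le_add h1 le_rfl
    refine le_trans ?_ h2
    rw [EReal.coe_le_coe_iff]
    have hsq := norm_sub_sq_real (w - v) v₀
    have hinner : ⟪w - v, v₀⟫ = ⟪w, v₀⟫ - ⟪v, v₀⟫ := inner_sub_left _ _ _
    nlinarith [sq_nonneg ‖w - v - v₀‖]
  have hne : moreauEnv ψ w ≠ ⊥ := fun h => by
    rw [h, le_bot_iff] at hbotlb; exact EReal.coe_ne_bot _ hbotlb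
  exact ⟨(moreauEnv ψ w).toReal, (EReal.coe_toReal htop hne).symm⟩

lemma sup_rep {G : Type*} [NormedAddCommGroup G] [InnerProductSpace ℝ G]
    {ψ : G → EReal} (hbot : ∀ x, ψ x ≠ ⊥) {η : ℝ} (hη : 0 < η) (w : G) {m : ℝ}
    (hm : moreauEnv ψ w = (m : EReal)) :
    ⨆ u : {u : G // ψ u ≠ ⊤},
        ((η * (⟪w, u.1⟫ - ((ψ u.1).toReal + ‖u.1‖ ^ 2 / 2)) : ℝ) : EReal)
      = ((η * (‖w‖ ^ 2 / 2 - m) : ℝ) : EReal) := by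
  apply le_antisymm
  · refine iSup_le fun u => ?_
    rw [EReal.coe_le_coe_iff]
    have hur : ((ψ u.1).toReal : EReal) = ψ u.1 := EReal.coe_toReal u.2 (hbot u.1)
    have h1 : (m : EReal) ≤ ψ u.1 + ((‖w - u.1‖ ^ 2 / 2 : ℝ) : EReal) := hm ▸ iInf_le _ u.1
    rw [← hur, ← EReal.coe_add, EReal.coe_le_coe_iff] at h1
    have hsq := norm_sub_sq_real w u.1
    nlinarith
  · apply coe_le_of_forall_eps
    intro ε hε
    have h1 : moreauEnv ψ w < ((m + ε / η : ℝ) : EReal) := by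
      rw [hm, EReal.coe_lt_coe_iff]
      have : 0 < ε / η := div_pos hε hη
      linarith
    rw [moreauEnv, iInf_lt_iff] at h1
    obtain ⟨v, hv⟩ := h1
    have hvtop : ψ v ≠ ⊤ := by
      intro h
      rw [h, EReal.top_add_of_ne_bot (EReal.coe_ne_bot _)] at hv
      exact absurd hv not_top_lt
    have hvr : ((ψ v).toReal : EReal) = ψ v := EReal.coe_toReal hvtop (hbot v)
    rw [← hvr, ← EReal.coe_add, EReal.coe_lt_coe_iff] at hv
    refine le_trans ?_ (le_iSup _ ⟨v, hvtop⟩)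
    rw [EReal.coe_le_coe_iff]
    have hsq := norm_sub_sq_real w v
    have hηε : η * (ε / η) = ε := by field_simp
    nlinarith [mul_lt_mul_of_pos_left hv hη]

lemma env_conj_eq {G : Type*} [NormedAddCommGroup G] [InnerProductSpace ℝ G] [CompleteSpace G]
    {ψ : G → EReal} (hψ : Gamma0 G ψ) (w : G) {m : ℝ}
    (hm : moreauEnv ψ w = (m : EReal)) :
    moreauEnv (conjFn ψ) w = ((‖w‖ ^ 2 / 2 - m : ℝ) : EReal) := by
  have hbot := hψ.1.1
  apply le_antisymm
  · -- via prox
    obtain ⟨p, hp1, hp2⟩ := prox_exists hψ w hm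
    have hptop : ψ p ≠ ⊤ := by
      intro h
      rw [h, EReal.top_add_of_ne_bot (EReal.coe_ne_bot _)] at hp1
      exact EReal.coe_ne_top m hp1.symm
    have hpr : ((ψ p).toReal : EReal) = ψ p := EReal.coe_toReal hptop (hbot p)
    set pR : ℝ := (ψ p).toReal with hpR
    have hpm : pR + ‖w - p‖ ^ 2 / 2 = m := by
      rw [← hpr, ← EReal.coe_add] at hp1
      exact_mod_cast hp1
    have hconjb : conjFn ψ (w - p) ≤ ((⟪p, w - p⟫ - pR : ℝ) : EReal) := by
      refine iSup_le fun z => ?_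
      rcases eq_or_ne (ψ z) ⊤ with hz | hz
      · rw [hz, EReal.sub_top]; exact bot_le
      · have hzr : ((ψ z).toReal : EReal) = ψ z := EReal.coe_toReal hz (hbot z)
        have h2 := hp2 z
        rw [← hpr, ← hzr, ← EReal.coe_add, EReal.coe_le_coe_iff] at h2
        rw [← hzr, ← EReal.coe_sub, EReal.coe_le_coe_iff]
        have hinner : ⟪z - p, w - p⟫ = ⟪z, w - p⟫ - ⟪p, w - p⟫ := inner_sub_left _ _ _
        linarith
    have h3 : moreauEnv (conjFn ψ) w ≤ conjFn ψ (w - p) + ((‖w - (w - p)‖ ^ 2 / 2 : ℝ) : EReal) :=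
      iInf_le _ (w - p)
    refine le_trans h3 ?_
    have hwp : w - (w - p) = p := by abel
    rw [hwp]
    calc conjFn ψ (w - p) + ((‖p‖ ^ 2 / 2 : ℝ) : EReal)
        ≤ ((⟪p, w - p⟫ - pR : ℝ) : EReal) + ((‖p‖ ^ 2 / 2 : ℝ) : EReal) :=
          add_le_add hconjb le_rfl
      _ = ((⟪p, w - p⟫ - pR + ‖p‖ ^ 2 / 2 : ℝ) : EReal) := by rw [← EReal.coe_add]
      _ ≤ ((‖w‖ ^ 2 / 2 - m : ℝ) : EReal) := by
          rw [EReal.coe_le_coe_iff]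
          have hinner : ⟪p, w - p⟫ = ⟪p, w⟫ - ⟪p, p⟫ := inner_sub_right _ _ _
          have hpp : ⟪p, p⟫ = ‖p‖ ^ 2 := real_inner_self_eq_norm_sq p
          have hsq := norm_sub_sq_real w p
          have hwp' : ⟪p, w⟫ = ⟪w, p⟫ := real_inner_comm w p
          nlinarith
  · -- easy direction via Young
    refine le_iInf fun v => ?_
    have hrep := sup_rep hbot one_pos w hm
    simp only [one_mul] at hrep
    rw [← hrep]
    refine iSup_le fun u => ?_
    have hur : ((ψ u.1).toReal : EReal) = ψ u.1 := EReal.coe_toReal u.2 (hbot u.1)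
    have hconj : ((⟪u.1, v⟫ - (ψ u.1).toReal : ℝ) : EReal) ≤ conjFn ψ v := by
      refine le_trans (le_of_eq ?_) (le_iSup _ u.1)
      rw [EReal.coe_sub, hur]
    calc ((⟪w, u.1⟫ - ((ψ u.1).toReal + ‖u.1‖ ^ 2 / 2) : ℝ) : EReal)
        ≤ ((⟪u.1, v⟫ - (ψ u.1).toReal + ‖w - v‖ ^ 2 / 2 : ℝ) : EReal) := by
          rw [EReal.coe_le_coe_iff]
          have hsq := norm_sub_sq_real (w - v) u.1
          have hinner : ⟪w - v, u.1⟫ = ⟪w, u.1⟫ - ⟪v, u.1⟫ := inner_sub_left _ _ _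
          have hcomm : ⟪u.1, v⟫ = ⟪v, u.1⟫ := real_inner_comm _ _
          nlinarith [sq_nonneg ‖w - v - u.1‖]
      _ = ((⟪u.1, v⟫ - (ψ u.1).toReal : ℝ) : EReal) + ((‖w - v‖ ^ 2 / 2 : ℝ) : EReal) := by
          rw [← EReal.coe_add]
      _ ≤ conjFn ψ v + ((‖w - v‖ ^ 2 / 2 : ℝ) : EReal) := add_le_add hconj le_rfl

lemma suppFn_eq {G : Type*} [NormedAddCommGroup G] [InnerProductSpace ℝ G]
    (ψ : G → EReal) (y : G) :
    suppFn {x : G | ψ x ≠ ⊤} y = ⨆ u : {u : G // ψ u ≠ ⊤}, ((⟪y, u.1⟫ : ℝ) : EReal) := by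
  rw [suppFn, iSup_subtype']
  rfl

lemma sup_rep' {G : Type*} [NormedAddCommGroup G] [InnerProductSpace ℝ G] [CompleteSpace G]
    {ψ : G → EReal} (hψ : Gamma0 G ψ) (w : G) {m : ℝ} (hm : moreauEnv ψ w = (m : EReal)) :
    ⨆ u : {u : G // ψ u ≠ ⊤},
        ((⟪w, u.1⟫ - ((ψ u.1).toReal + ‖u.1‖ ^ 2 / 2) : ℝ) : EReal)
      = moreauEnv (conjFn ψ) w := by
  have h1 := sup_rep hψ.1.1 one_pos w hm
  simp only [one_mul] at h1
  rw [h1, env_conj_eq hψ w hm]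

lemma rec_env_conj {G : Type*} [NormedAddCommGroup G] [InnerProductSpace ℝ G] [CompleteSpace G]
    {ψ : G → EReal} (hψ : Gamma0 G ψ) (y : G) :
    recFn (moreauEnv (conjFn ψ)) y
      = ⨆ u : {u : G // ψ u ≠ ⊤}, ((⟪y, u.1⟫ : ℝ) : EReal) := by
  have hbot := hψ.1.1
  set f : G → EReal := moreauEnv (conjFn ψ) with hfdef
  have hfr : ∀ w, ∃ r : ℝ, f w = (r : EReal) := by
    intro w
    obtain ⟨m, hm⟩ := env_real hψ w
    exact ⟨_, env_conj_eq hψ w hm⟩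
  set fR : G → ℝ := fun w => (f w).toReal with hfRdef
  have hf : ∀ w, f w = ((fR w : ℝ) : EReal) := by
    intro w
    obtain ⟨r, hr⟩ := hfr w
    simp [hfRdef, hr]
  have hS : ∀ w, ⨆ u : {u : G // ψ u ≠ ⊤},
      ((⟪w, u.1⟫ - ((ψ u.1).toReal + ‖u.1‖ ^ 2 / 2) : ℝ) : EReal) = f w := by
    intro w
    obtain ⟨m, hm⟩ := env_real hψ w
    exact sup_rep' hψ w hm
  apply le_antisymm
  · -- recFn ≤ sup
    refine iSup_le fun x => ?_
    have hx : f (x.1 + y) - f x.1 ≤ (⨆ u : {u : G // ψ u ≠ ⊤}, ((⟪y, u.1⟫ : ℝ) : EReal)) ↔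
        f (x.1 + y) ≤ (⨆ u : {u : G // ψ u ≠ ⊤}, ((⟪y, u.1⟫ : ℝ) : EReal)) + f x.1 :=
      EReal.sub_le_iff_le_add (Or.inl (by rw [hf x.1]; exact EReal.coe_ne_bot _))
        (Or.inl (by rw [hf x.1]; exact EReal.coe_ne_top _))
    rw [hx, ← hS (x.1 + y), ← hS x.1]
    refine iSup_le fun u => ?_
    have hinner : ⟪x.1 + y, u.1⟫ = ⟪x.1, u.1⟫ + ⟪y, u.1⟫ := inner_add_left _ _ _
    have heq : ((⟪x.1 + y, u.1⟫ - ((ψ u.1).toReal + ‖u.1‖ ^ 2 / 2) : ℝ) : EReal)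
        = ((⟪y, u.1⟫ : ℝ) : EReal)
          + ((⟪x.1, u.1⟫ - ((ψ u.1).toReal + ‖u.1‖ ^ 2 / 2) : ℝ) : EReal) := by
      rw [← EReal.coe_add]
      norm_cast
      rw [hinner]; ring
    rw [heq]
    exact add_le_add
      (le_iSup (fun v : {u : G // ψ u ≠ ⊤} => ((⟪y, v.1⟫ : ℝ) : EReal)) u)
      (le_iSup (fun v : {u : G // ψ u ≠ ⊤} =>
        ((⟪x.1, v.1⟫ - ((ψ v.1).toReal + ‖v.1‖ ^ 2 / 2) : ℝ) : EReal)) u)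
  · refine iSup_le fun u => ?_
    have hstep : ∀ x : G, f (x + y) - f x ≤ recFn f y := by
      intro x
      exact le_iSup (fun x' : {x' : G // f x' ≠ ⊤} => f (x'.1 + y) - f x'.1)
        ⟨x, by rw [hf x]; exact EReal.coe_ne_top _⟩
    rcases eq_or_ne (recFn f y) ⊤ with hR | hR
    · rw [hR]; exact le_top
    have hRbot : recFn f y ≠ ⊥ := by
      intro h
      have := hstep 0
      rw [h, hf (0 + y), hf 0, ← EReal.coe_sub, le_bot_iff] at this
      exact EReal.coe_ne_bot _ this
    set R : ℝ := (recFn f y).toReal with hRdef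
    have hRR : recFn f y = ((R : ℝ) : EReal) := (EReal.coe_toReal hR hRbot).symm
    have hstepR : ∀ x : G, fR (x + y) - fR x ≤ R := by
      intro x
      have := hstep x
      rw [hf (x + y), hf x, ← EReal.coe_sub, hRR, EReal.coe_le_coe_iff] at this
      exact this
    have htel : ∀ n : ℕ, fR ((n : ℝ) • y) ≤ fR 0 + n * R := by
      intro n
      induction n with
      | zero => simp
      | succ n ih =>
        have hsm : ((n + 1 : ℕ) : ℝ) • y = (n : ℝ) • y + y := by
          push_cast [add_smul, one_smul]; ring_nf
        rw [hsm]
        have := hstepR ((n : ℝ) • y)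
        push_cast
        linarith
    have hlb : ∀ w : G, ⟪w, u.1⟫ - ((ψ u.1).toReal + ‖u.1‖ ^ 2 / 2) ≤ fR w := by
      intro w
      have h1 : ((⟪w, u.1⟫ - ((ψ u.1).toReal + ‖u.1‖ ^ 2 / 2) : ℝ) : EReal) ≤ f w := by
        rw [← hS w]
        exact le_iSup (fun v : {u : G // ψ u ≠ ⊤} =>
          ((⟪w, v.1⟫ - ((ψ v.1).toReal + ‖v.1‖ ^ 2 / 2) : ℝ) : EReal)) u
      rw [hf w, EReal.coe_le_coe_iff] at h1
      exact h1
    have hkey : ∀ n : ℕ, (n : ℝ) * ⟪y, u.1⟫ - ((ψ u.1).toReal + ‖u.1‖ ^ 2 / 2)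
        ≤ fR 0 + n * R := by
      intro n
      have h1 := hlb ((n : ℝ) • y)
      have h2 : ⟪(n : ℝ) • y, u.1⟫ = (n : ℝ) * ⟪y, u.1⟫ := real_inner_smul_left _ _ _
      rw [h2] at h1
      exact le_trans h1 (htel n)
    have hfin : ⟪y, u.1⟫ ≤ R := by
      by_contra hc
      push_neg at hc
      set δ : ℝ := ⟪y, u.1⟫ - R with hδ
      have hδ0 : 0 < δ := by simp [hδ]; linarith
      set C : ℝ := (ψ u.1).toReal + ‖u.1‖ ^ 2 / 2 + fR 0 with hC
      obtain ⟨n, hn⟩ := exists_nat_gt (C / δ)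
      have h1 := hkey n
      have h2 : C / δ < n := hn
      rw [div_lt_iff₀ hδ0] at h2
      have h3 : (n : ℝ) * ⟪y, u.1⟫ - (n : ℝ) * R = n * δ := by rw [hδ]; ring
      clear_value δ C R fR f
      linarith
    rw [hRR]
    exact_mod_cast hfin

lemma g_pos_rep {G : Type*} [NormedAddCommGroup G] [InnerProductSpace ℝ G] [CompleteSpace G]
    {ψ : G → EReal} (hψ : Gamma0 G ψ) {η : ℝ} (hη : 0 < η) (y : G) {m : ℝ}
    (hm : moreauEnv ψ (η⁻¹ • y) = (m : EReal)) :
    ((‖y‖ ^ 2 / (2 * η) : ℝ) : EReal) - (η : EReal) * moreauEnv ψ (η⁻¹ • y)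
      = ⨆ u : {u : G // ψ u ≠ ⊤},
          ((⟪y, u.1⟫ - η * ((ψ u.1).toReal + ‖u.1‖ ^ 2 / 2) : ℝ) : EReal) := by
  have h1 := sup_rep hψ.1.1 hη (η⁻¹ • y) hm
  have h2 : ∀ u : {u : G // ψ u ≠ ⊤},
      η * (⟪η⁻¹ • y, u.1⟫ - ((ψ u.1).toReal + ‖u.1‖ ^ 2 / 2))
        = ⟪y, u.1⟫ - η * ((ψ u.1).toReal + ‖u.1‖ ^ 2 / 2) := by
    intro u
    have : ⟪η⁻¹ • y, u.1⟫ = η⁻¹ * ⟪y, u.1⟫ := real_inner_smul_left _ _ _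
    rw [this]
    field_simp
  have h3 : ⨆ u : {u : G // ψ u ≠ ⊤},
      ((η * (⟪η⁻¹ • y, u.1⟫ - ((ψ u.1).toReal + ‖u.1‖ ^ 2 / 2)) : ℝ) : EReal)
        = ⨆ u : {u : G // ψ u ≠ ⊤},
          ((⟪y, u.1⟫ - η * ((ψ u.1).toReal + ‖u.1‖ ^ 2 / 2) : ℝ) : EReal) :=
    iSup_congr fun u => by rw [h2 u]
  rw [← h3, h1, hm, ← EReal.coe_mul, ← EReal.coe_sub]
  norm_cast
  have hn : ‖η⁻¹ • y‖ ^ 2 = η⁻¹ ^ 2 * ‖y‖ ^ 2 := by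
    rw [norm_smul]
    simp [mul_pow, abs_of_pos (inv_pos.2 hη)]
  rw [hn]
  field_simp

end P17

/-- the function
`g(η,y) = ‖y‖²/(2η) − η (env ψ)(y/η)` for `η > 0`, `σ_{dom ψ}(y)` for `η = 0`,
`+∞` for `η < 0`, equals the perspective of the Moreau envelope of `ψ*` and
belongs to `Γ₀(ℝ ⊕ 𝒢)`. -/
theorem perspective_of_moreau_envelope_of_conjugate
    {G : Type*} [NormedAddCommGroup G] [InnerProductSpace ℝ G] [CompleteSpace G]
    (ψ : G → EReal) (hψ : Gamma0 G ψ)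
    (g : ℝ × G → EReal)
    (hg : g = fun z =>
      if 0 < z.1 then
        ((‖z.2‖ ^ 2 / (2 * z.1) : ℝ) : EReal)
          - (z.1 : EReal) * moreauEnv ψ (z.1⁻¹ • z.2)
      else if z.1 = 0 then suppFn {x : G | ψ x ≠ ⊤} z.2
      else ⊤) :
    g = persp (moreauEnv (conjFn ψ)) ∧ Gamma0 (ℝ × G) g := by
  have hbot := hψ.1.1
  obtain ⟨x₀, hx₀⟩ := hψ.1.2
  constructor
  · -- equality with the perspective
    rw [hg]
    funext p
    obtain ⟨η, y⟩ := p
    dsimp only [persp]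
    rcases lt_trichotomy 0 η with hη | hη | hη
    · rw [if_pos hη, if_pos hη]
      obtain ⟨m, hm⟩ := P17.env_real hψ (η⁻¹ • y)
      rw [P17.env_conj_eq hψ _ hm, hm, ← EReal.coe_mul, ← EReal.coe_mul, ← EReal.coe_sub]
      norm_cast
      have hn : ‖η⁻¹ • y‖ ^ 2 = η⁻¹ ^ 2 * ‖y‖ ^ 2 := by
        rw [norm_smul]
        simp [mul_pow, abs_of_pos (inv_pos.2 hη)]
      rw [hn]
      field_simp
    · subst hη
      rw [if_neg (lt_irrefl 0), if_neg (lt_irrefl 0), if_pos rfl, if_pos rfl]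
      exact (P17.suppFn_eq ψ y).trans (P17.rec_env_conj hψ y).symm
    · rw [if_neg (not_lt.2 hη.le), if_neg (not_lt.2 hη.le), if_neg hη.ne, if_neg hη.ne]
  · -- Gamma0
    set c₀ : ℝ := (ψ x₀).toReal + ‖x₀‖ ^ 2 / 2 with hc₀
    set L : ({u : G // ψ u ≠ ⊤} ⊕ ℕ) → ℝ × G → ℝ := fun i p =>
      match i with
      | Sum.inl u => ⟪p.2, u.1⟫ - p.1 * ((ψ u.1).toReal + ‖u.1‖ ^ 2 / 2)
      | Sum.inr n => ⟪p.2, x₀⟫ - p.1 * (c₀ + n) with hL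
    have hrep : ∀ p : ℝ × G, g p = ⨆ i, ((L i p : ℝ) : EReal) := by
      intro p
      obtain ⟨η, y⟩ := p
      rcases lt_trichotomy 0 η with hη | hη | hη
      · obtain ⟨m, hm⟩ := P17.env_real hψ (η⁻¹ • y)
        rw [hg]
        dsimp only
        rw [if_pos hη, P17.g_pos_rep hψ hη y hm]
        apply le_antisymm
        · refine iSup_le fun u => ?_
          exact le_iSup (fun i => ((L i (η, y) : ℝ) : EReal)) (Sum.inl u)
        · refine iSup_le fun i => ?_
          rcases i with u | n
          · exact le_iSup (fun u : {u : G // ψ u ≠ ⊤} =>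
              ((⟪y, u.1⟫ - η * ((ψ u.1).toReal + ‖u.1‖ ^ 2 / 2) : ℝ) : EReal)) u
          · refine le_trans ?_ (le_iSup (fun u : {u : G // ψ u ≠ ⊤} =>
              ((⟪y, u.1⟫ - η * ((ψ u.1).toReal + ‖u.1‖ ^ 2 / 2) : ℝ) : EReal)) ⟨x₀, hx₀⟩)
            show ((⟪y, x₀⟫ - η * (c₀ + n) : ℝ) : EReal)
              ≤ ((⟪y, x₀⟫ - η * ((ψ x₀).toReal + ‖x₀‖ ^ 2 / 2) : ℝ) : EReal)
            rw [EReal.coe_le_coe_iff, hc₀]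
            nlinarith [mul_nonneg hη.le (Nat.cast_nonneg n : (0 : ℝ) ≤ n)]
      · subst hη
        rw [hg]
        dsimp only
        rw [if_neg (lt_irrefl 0), if_pos rfl, P17.suppFn_eq]
        apply le_antisymm
        · refine iSup_le fun u => ?_
          refine le_trans (le_of_eq ?_) (le_iSup (fun i => ((L i (0, y) : ℝ) : EReal))
            (Sum.inl u))
          show ((⟪y, u.1⟫ : ℝ) : EReal)
            = ((⟪y, u.1⟫ - 0 * ((ψ u.1).toReal + ‖u.1‖ ^ 2 / 2) : ℝ) : EReal)
          norm_num
        · refine iSup_le fun i => ?_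
          rcases i with u | n
          · refine le_trans (le_of_eq ?_) (le_iSup (fun u : {u : G // ψ u ≠ ⊤} =>
              ((⟪y, u.1⟫ : ℝ) : EReal)) u)
            show ((⟪y, u.1⟫ - 0 * ((ψ u.1).toReal + ‖u.1‖ ^ 2 / 2) : ℝ) : EReal)
              = ((⟪y, u.1⟫ : ℝ) : EReal)
            norm_num
          · refine le_trans (le_of_eq ?_) (le_iSup (fun u : {u : G // ψ u ≠ ⊤} =>
              ((⟪y, u.1⟫ : ℝ) : EReal)) ⟨x₀, hx₀⟩)
            show ((⟪y, x₀⟫ - 0 * (c₀ + n) : ℝ) : EReal) = ((⟪y, x₀⟫ : ℝ) : EReal)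
            norm_num
      · rw [hg]
        dsimp only
        rw [if_neg (not_lt.2 hη.le), if_neg hη.ne]
        symm
        rw [EReal.eq_top_iff_forall_lt]
        intro r
        obtain ⟨n, hn⟩ := exists_nat_gt ((r - ⟪y, x₀⟫ + η * c₀) / (-η))
        have hr : r < ⟪y, x₀⟫ - η * (c₀ + n) := by
          rw [div_lt_iff₀ (neg_pos.2 hη)] at hn
          nlinarith
        refine lt_of_lt_of_le (EReal.coe_lt_coe_iff.2 hr) ?_
        exact le_iSup (fun i => ((L i (η, y) : ℝ) : EReal)) (Sum.inr n)
    refine ⟨⟨?_, ?_⟩, ?_, ?_⟩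
    · -- never ⊥
      intro p hbp
      have h1 : ((L (Sum.inl ⟨x₀, hx₀⟩) p : ℝ) : EReal) ≤ g p := by
        rw [hrep p]
        exact le_iSup (fun i => ((L i p : ℝ) : EReal)) (Sum.inl ⟨x₀, hx₀⟩)
      rw [hbp, le_bot_iff] at h1
      exact EReal.coe_ne_bot _ h1
    · -- somewhere finite
      refine ⟨((1 : ℝ), (0 : G)), ?_⟩
      obtain ⟨m, hm⟩ := P17.env_real hψ (((1 : ℝ))⁻¹ • (0 : G))
      rw [hg]
      dsimp only
      rw [if_pos one_pos, hm,
        show ((1 : ℝ) : EReal) * ((m : ℝ) : EReal) = ((1 * m : ℝ) : EReal) from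
          (EReal.coe_mul _ _).symm, ← EReal.coe_sub]
      exact EReal.coe_ne_top _
    · -- lower semicontinuous
      rw [funext hrep]
      apply lowerSemicontinuous_iSup
      intro i
      apply Continuous.lowerSemicontinuous
      apply continuous_coe_real_ereal.comp
      rcases i with u | n
      · show Continuous fun p : ℝ × G => ⟪p.2, u.1⟫ - p.1 * ((ψ u.1).toReal + ‖u.1‖ ^ 2 / 2)
        exact (continuous_snd.inner continuous_const).sub (continuous_fst.mul continuous_const)
      · show Continuous fun p : ℝ × G => ⟪p.2, x₀⟫ - p.1 * (c₀ + n)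
        exact (continuous_snd.inner continuous_const).sub (continuous_fst.mul continuous_const)
    · -- convex
      intro x y a b ha hb hab
      rw [hrep (a • x + b • y), hrep x, hrep y]
      refine iSup_le fun i => ?_
      have haff : L i (a • x + b • y) = a * L i x + b * L i y := by
        have h1 : (a • x + b • y).1 = a * x.1 + b * y.1 := rfl
        have h2 : (a • x + b • y).2 = a • x.2 + b • y.2 := rfl
        rcases i with u | n
        · show ⟪(a • x + b • y).2, u.1⟫ - (a • x + b • y).1 * ((ψ u.1).toReal + ‖u.1‖ ^ 2 / 2)
            = a * (⟪x.2, u.1⟫ - x.1 * ((ψ u.1).toReal + ‖u.1‖ ^ 2 / 2))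
              + b * (⟪y.2, u.1⟫ - y.1 * ((ψ u.1).toReal + ‖u.1‖ ^ 2 / 2))
          rw [h1, h2, inner_add_left, real_inner_smul_left, real_inner_smul_left]
          ring
        · show ⟪(a • x + b • y).2, x₀⟫ - (a • x + b • y).1 * (c₀ + n)
            = a * (⟪x.2, x₀⟫ - x.1 * (c₀ + n)) + b * (⟪y.2, x₀⟫ - y.1 * (c₀ + n))
          rw [h1, h2, inner_add_left, real_inner_smul_left, real_inner_smul_left]
          ring
      rw [haff, EReal.coe_add, EReal.coe_mul, EReal.coe_mul]
      exact add_le_add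
        (mul_le_mul_of_nonneg_left
          (le_iSup (fun j => ((L j x : ℝ) : EReal)) i) (by exact_mod_cast ha))
        (mul_le_mul_of_nonneg_left
          (le_iSup (fun j => ((L j y : ℝ) : EReal)) i) (by exact_mod_cast hb))

end
end
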